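/- arXiv:2605.24480 — 8 statements merged into one kernel-verified Lean document; each statement's English description precedes it below -/
import Mathlib

section
/- Let n, m ≥ 4 be integers and set N = 2^(n-1), M = 2^(m-1), α = 2^(n-2) - 1, β = 2^(m-2) - 1. Let G be a group and x, y, z, w ∈ G such that: orderOf x = N, orderOf z = M, y^2 = 1, w^2 = 1, y⁻¹ * x * y = x^α, w⁻¹ * z * w = z^β, x * z = z * x, and for integers a, s, t, c one has y⁻¹ * z * y = z^(1+a), w⁻¹ * x * w = x^(1+s), and w⁻¹ * y * w = y * x^t * z^c. Assume moreover that the cyclic subgroups ⟨x⟩ := Subgroup.zpowers x and ⟨z⟩ := Subgroup.zpowers z satisfy ⟨x⟩ ⊓ ⟨z⟩ = ⊥. Then the following six congruences of integers hold: (1+a)^2 ≡ 1 (mod M), (1+s)^2 ≡ 1 (mod N), t·(2+s) ≡ 0 (mod N), c·(1+β) ≡ 0 (mod M), t·(1+α) ≡ 0 (mod N), and c·(2+a) ≡ 0 (mod M). -/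
/-!
Conjugation by the involutions `y` and `w` acts on the abelian subgroup `⟨x⟩⟨z⟩` by
`x^e z^f ↦ x^(eα) z^(f(1+a))` and `x^e z^f ↦ x^(e(1+s)) z^(fβ)` respectively. Since both act as
involutions, `(1+a)^2 ≡ 1` and `(1+s)^2 ≡ 1`. Writing `u = x^t z^c`, the relation `w⁻¹yw = yu`
applied twice gives `u · u^w = 1`, and squaring it gives `(yu)^2 = u^y · u = 1`. As
`⟨x⟩ ∩ ⟨z⟩ = 1`, each of these two words in `x` and `z` is trivial only when both its exponents
vanish modulo the orders of `x` and `z`, which are the remaining four congruences.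
-/

open Subgroup

section Conjugation

variable {G : Type*} [Group G]

theorem inv_conj_zpow_of_inv_conj_eq {g h : G} {k : ℤ} (hg : g⁻¹ * h * g = h ^ k) (e : ℤ) :
    g⁻¹ * h ^ e * g = h ^ (e * k) := by
  rw [mul_comm, zpow_mul, ← hg]
  simpa using (conj_zpow (a := g⁻¹) (b := h) (i := e)).symm

theorem inv_conj_zpow_mul_zpow {g x z : G} {p q : ℤ} (hx : g⁻¹ * x * g = x ^ p)
    (hz : g⁻¹ * z * g = z ^ q) (e f : ℤ) :
    g⁻¹ * (x ^ e * z ^ f) * g = x ^ (e * p) * z ^ (f * q) := by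
  rw [← inv_conj_zpow_of_inv_conj_eq hx, ← inv_conj_zpow_of_inv_conj_eq hz]
  group

theorem sq_modEq_one_of_inv_conj_eq {g x : G} {k : ℤ} (hg : g ^ 2 = 1)
    (h : g⁻¹ * x * g = x ^ k) : k ^ 2 ≡ 1 [ZMOD orderOf x] := by
  have hx : x ^ (k ^ 2) = x :=
    calc x ^ (k ^ 2) = g⁻¹ * (g⁻¹ * x * g) * g := by
          rw [h, inv_conj_zpow_of_inv_conj_eq h, sq]
      _ = (g ^ 2)⁻¹ * x * g ^ 2 := by rw [sq]; group
      _ = x := by rw [hg]; group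
  refine (Int.modEq_iff_dvd.mpr (orderOf_dvd_iff_zpow_eq_one.mpr ?_)).symm
  rw [zpow_sub, hx, zpow_one, mul_inv_cancel]

theorem mul_inv_conj_eq_one_of_inv_conj_eq_mul {w y u : G} (hw : w ^ 2 = 1)
    (h : w⁻¹ * y * w = y * u) : u * (w⁻¹ * u * w) = 1 := by
  refine mul_left_cancel (a := y) ?_
  calc y * (u * (w⁻¹ * u * w)) = (w⁻¹ * y * w) * (w⁻¹ * u * w) := by rw [h]; group
    _ = w⁻¹ * (y * u) * w := by group
    _ = w⁻¹ * (w⁻¹ * y * w) * w := by rw [h]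
    _ = (w ^ 2)⁻¹ * y * w ^ 2 := by rw [sq]; group
    _ = y * 1 := by rw [hw]; group

theorem sq_mul_eq_inv_conj_mul {y : G} (hy : y ^ 2 = 1) (u : G) :
    (y * u) ^ 2 = (y⁻¹ * u * y) * u := by
  rw [inv_eq_of_mul_eq_one_right (sq y ▸ hy), sq]
  group

theorem zpow_mul_zpow_mul_zpow_mul_zpow {x z : G} (hxz : Commute x z) (e f e' f' : ℤ) :
    x ^ e * z ^ f * (x ^ e' * z ^ f') = x ^ (e + e') * z ^ (f + f') := by
  rw [zpow_add, zpow_add, mul_assoc, ← mul_assoc (z ^ f), (hxz.zpow_zpow e' f).symm.eq]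
  group

theorem modEq_orderOf_of_zpow_mul_zpow_eq_one {x z : G}
    (hxz : Disjoint (zpowers x) (zpowers z)) {e f : ℤ} (h : x ^ e * z ^ f = 1) :
    e ≡ 0 [ZMOD orderOf x] ∧ f ≡ 0 [ZMOD orderOf z] := by
  obtain ⟨hx, hz⟩ := disjoint_iff_mul_eq_one.mp hxz (zpow_mem_zpowers x e) (zpow_mem_zpowers z f) h
  exact ⟨Int.modEq_zero_iff_dvd.mpr (orderOf_dvd_iff_zpow_eq_one.mpr hx),
    Int.modEq_zero_iff_dvd.mpr (orderOf_dvd_iff_zpow_eq_one.mpr hz)⟩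

end Conjugation

theorem stmt_0_general (n m : ℕ)
    {G : Type*} [Group G] (x y z w : G) (a s t c : ℤ)
    (hx : orderOf x = 2 ^ (n - 1)) (hz : orderOf z = 2 ^ (m - 1))
    (hy : y ^ 2 = 1) (hw : w ^ 2 = 1)
    (hxy : y⁻¹ * x * y = x ^ ((2 : ℤ) ^ (n - 2) - 1))
    (hzw : w⁻¹ * z * w = z ^ ((2 : ℤ) ^ (m - 2) - 1))
    (hxz : x * z = z * x)
    (hzy : y⁻¹ * z * y = z ^ (1 + a))
    (hxw : w⁻¹ * x * w = x ^ (1 + s))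
    (hyw : w⁻¹ * y * w = y * x ^ t * z ^ c)
    (hbot : Subgroup.zpowers x ⊓ Subgroup.zpowers z = ⊥) :
    (1 + a) ^ 2 ≡ 1 [ZMOD (2 : ℤ) ^ (m - 1)] ∧
    (1 + s) ^ 2 ≡ 1 [ZMOD (2 : ℤ) ^ (n - 1)] ∧
    t * (2 + s) ≡ 0 [ZMOD (2 : ℤ) ^ (n - 1)] ∧
    c * (1 + ((2 : ℤ) ^ (m - 2) - 1)) ≡ 0 [ZMOD (2 : ℤ) ^ (m - 1)] ∧
    t * (1 + ((2 : ℤ) ^ (n - 2) - 1)) ≡ 0 [ZMOD (2 : ℤ) ^ (n - 1)] ∧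
    c * (2 + a) ≡ 0 [ZMOD (2 : ℤ) ^ (m - 1)] := by
  have hdisj : Disjoint (zpowers x) (zpowers z) := disjoint_iff.mpr hbot
  have hyw' : w⁻¹ * y * w = y * (x ^ t * z ^ c) := by rw [hyw, mul_assoc]
  have hw_twice := mul_inv_conj_eq_one_of_inv_conj_eq_mul hw hyw'
  rw [inv_conj_zpow_mul_zpow hxw hzw, zpow_mul_zpow_mul_zpow_mul_zpow hxz] at hw_twice
  have hy_sq : (y * (x ^ t * z ^ c)) ^ 2 = 1 := by
    have := conj_pow (a := w⁻¹) (b := y) (i := 2)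
    rw [inv_inv] at this
    rw [← hyw', this, hy]
    group
  rw [sq_mul_eq_inv_conj_mul hy, inv_conj_zpow_mul_zpow hxy hzy,
    zpow_mul_zpow_mul_zpow_mul_zpow hxz] at hy_sq
  obtain ⟨c3, c4⟩ := modEq_orderOf_of_zpow_mul_zpow_eq_one hdisj hw_twice
  obtain ⟨c5, c6⟩ := modEq_orderOf_of_zpow_mul_zpow_eq_one hdisj hy_sq
  have c1 := sq_modEq_one_of_inv_conj_eq hy hzy
  have c2 := sq_modEq_one_of_inv_conj_eq hw hxw
  simp only [hx, hz, Nat.cast_pow, Nat.cast_ofNat] at c1 c2 c3 c4 c5 c6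
  exact ⟨c1, c2, by convert c3 using 2; ring, by convert c4 using 2; ring,
    by convert c5 using 2; ring, by convert c6 using 2; ring⟩

/-- Necessity direction of Theorem A (Theorem 4.1): in an exact product of two
semidihedral groups with `⟨x⟩` and `⟨z⟩` normal, the parameters `(a, s, t, c)`
satisfy the six congruences (C1)–(C6). -/
theorem stmt_0 (n m : ℕ) (hn : 4 ≤ n) (hm : 4 ≤ m)
    {G : Type*} [Group G] (x y z w : G) (a s t c : ℤ)
    (hx : orderOf x = 2 ^ (n - 1)) (hz : orderOf z = 2 ^ (m - 1))
    (hy : y ^ 2 = 1) (hw : w ^ 2 = 1)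
    (hxy : y⁻¹ * x * y = x ^ ((2 : ℤ) ^ (n - 2) - 1))
    (hzw : w⁻¹ * z * w = z ^ ((2 : ℤ) ^ (m - 2) - 1))
    (hxz : x * z = z * x)
    (hzy : y⁻¹ * z * y = z ^ (1 + a))
    (hxw : w⁻¹ * x * w = x ^ (1 + s))
    (hyw : w⁻¹ * y * w = y * x ^ t * z ^ c)
    (hbot : Subgroup.zpowers x ⊓ Subgroup.zpowers z = ⊥) :
    (1 + a) ^ 2 ≡ 1 [ZMOD (2 : ℤ) ^ (m - 1)] ∧
    (1 + s) ^ 2 ≡ 1 [ZMOD (2 : ℤ) ^ (n - 1)] ∧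
    t * (2 + s) ≡ 0 [ZMOD (2 : ℤ) ^ (n - 1)] ∧
    c * (1 + ((2 : ℤ) ^ (m - 2) - 1)) ≡ 0 [ZMOD (2 : ℤ) ^ (m - 1)] ∧
    t * (1 + ((2 : ℤ) ^ (n - 2) - 1)) ≡ 0 [ZMOD (2 : ℤ) ^ (n - 1)] ∧
    c * (2 + a) ≡ 0 [ZMOD (2 : ℤ) ^ (m - 1)] :=
  stmt_0_general n m x y z w a s t c hx hz hy hw hxy hzw hxz hzy hxw hyw hbot
end

section
/- Let n, m ≥ 4 be integers and set N = 2^(n-1), M = 2^(m-1), α = 2^(n-2) - 1, β = 2^(m-2) - 1. Let a, s, t, c be integers satisfying the six congruences: (1+a)^2 ≡ 1 (mod M), (1+s)^2 ≡ 1 (mod N), t·(2+s) ≡ 0 (mod N), c·(1+β) ≡ 0 (mod M), t·(1+α) ≡ 0 (mod N), and c·(2+a) ≡ 0 (mod M). Then there exist a group G and elements x, y, z, w ∈ G such that: Nat.card G = 2^(n+m); orderOf x = N, orderOf y = 2, orderOf z = M, orderOf w = 2; y⁻¹ * x * y = x^α; w⁻¹ * z * w = z^β; x * z = z * x; y⁻¹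 * z * y = z^(1+a); w⁻¹ * x * w = x^(1+s); w⁻¹ * y * w = y * x^t * z^c; Subgroup.closure {x, y, z, w} = ⊤; Nat.card (Subgroup.closure {x, y}) = 2^n; Nat.card (Subgroup.closure {z, w}) = 2^m; Subgroup.closure {x, y} ⊓ Subgroup.closure {z, w} = ⊥; and both Subgroup.zpowers x and Subgroup.zpowers z are normal subgroups of G. -/
/-!
Let `A = ⟨x⟩ × ⟨z⟩ ≅ C_N × C_M` and let `y` and `w` act on `A` by the power maps
`Y : (x, z) ↦ (x ^ α, z ^ (1 + a))` and `W : (x, z) ↦ (x ^ (1 + s), z ^ β)`. These commute, are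
involutive by (C1), (C2), `α² ≡ 1 (mod N)` and `β² ≡ 1 (mod M)`, and (C3)–(C6) say exactly that
both invert `u = x ^ t z ^ c`. Put `H = A ⋊ ⟨y⟩` and let `w` act on `H` by `W` on `A` and by
`y ↦ u⁻¹ y`; this is an involutive automorphism because `W` commutes with `Y` and
`W u = Y u = u⁻¹`. In `G = H ⋊ ⟨w⟩`, of order `4NM`, one has `w⁻¹ y w = y u`, the subgroups
`⟨x, y⟩ ≅ ⟨x⟩ ⋊ ⟨y⟩` and `⟨z, w⟩ ≅ ⟨z⟩ ⋊ ⟨w⟩` have orders `2N` and `2M`, meet trivially and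
generate `G`, and `⟨x⟩`, `⟨z⟩` are normal because every generator conjugates them into themselves.
-/

open SemidirectProduct Multiplicative

lemma Multiplicative.zmod_two_eq_one_or (g : Multiplicative (ZMod 2)) : g = 1 ∨ g = ofAdd 1 := by
  revert g; decide

lemma Multiplicative.zpowers_ofAdd_one (n : ℕ) :
    Subgroup.zpowers (ofAdd 1 : Multiplicative (ZMod n)) = ⊤ :=
  eq_top_iff.mpr fun g _ => ⟨(g.toAdd.cast : ℤ), by simp [← ofAdd_zsmul]⟩

section Involution

variable {M : Type*} [Monoid M]

def involutionHom (a : M) (ha : a * a = 1) : Multiplicative (ZMod 2) →* M where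
  toFun g := a ^ g.toAdd.val
  map_one' := pow_zero a
  map_mul' g h := by
    rcases g.zmod_two_eq_one_or with rfl | rfl <;> rcases h.zmod_two_eq_one_or with rfl | rfl <;>
      simp [← ofAdd_add, show (1 + 1 : ZMod 2) = 0 from rfl, ZMod.val_one, ha]

@[simp] lemma involutionHom_ofAdd_one (a : M) (ha : a * a = 1) :
    involutionHom a ha (ofAdd 1) = a :=
  pow_one a

end Involution

lemma MonoidHom.comp_involutionHom {B A : Type*} [Group B] [Group A] (f : B →* A)
    {a : MulAut B} {a' : MulAut A} (ha : a * a = 1) (ha' : a' * a' = 1)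
    (h : ∀ b, f (a b) = a' (f b)) (g : Multiplicative (ZMod 2)) :
    f.comp (involutionHom a ha g).toMonoidHom = (involutionHom a' ha' g).toMonoidHom.comp f := by
  rcases g.zmod_two_eq_one_or with rfl | rfl
  · ext; simp
  · ext; simp [h]

lemma SemidirectProduct.closure_image_inl_union_image_inr {N G : Type*} [Group N] [Group G]
    {φ : G →* MulAut N} {s : Set N} {t : Set G} (hs : Subgroup.closure s = ⊤)
    (ht : Subgroup.closure t = ⊤) :
    Subgroup.closure ((inl : N →* N ⋊[φ] G) '' s ∪ inr '' t) = ⊤ := by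
  refine eq_top_iff.mpr fun g _ => ?_
  rw [← inl_left_mul_inr_right g]
  refine mul_mem (Subgroup.closure_mono Set.subset_union_left ?_)
    (Subgroup.closure_mono Set.subset_union_right ?_)
  · rw [← MonoidHom.map_closure, hs]
    exact ⟨g.left, Subgroup.mem_top _, rfl⟩
  · rw [← MonoidHom.map_closure, ht]
    exact ⟨g.right, Subgroup.mem_top _, rfl⟩

@[simp] lemma MulEquiv.prodCongr_apply {M M' N N' : Type*} [MulOneClass M] [MulOneClass M']
    [MulOneClass N] [MulOneClass N'] (f : M ≃* M') (g : N ≃* N') (p : M × N) :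
    f.prodCongr g p = (f p.1, g p.2) := rfl

lemma zpow_eq_zpow_of_modEq_natCard {G : Type*} [Group G] (x : G) {m n : ℤ}
    (h : m ≡ n [ZMOD Nat.card G]) : x ^ m = x ^ n :=
  zpow_eq_zpow_iff_modEq.mpr (h.of_dvd (Int.natCast_dvd_natCast.mpr (orderOf_dvd_natCard x)))

lemma Subgroup.normal_of_forall_conj_mem {G : Type*} [Group G] [Finite G] {K : Subgroup G}
    {S : Set G} (hS : closure S = ⊤) (h : ∀ g ∈ S, ∀ k ∈ K, g⁻¹ * k * g ∈ K) : K.Normal := by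
  rw [← normalizer_eq_top_iff, eq_top_iff, ← hS, closure_le]
  intro g hg
  have hg' : g⁻¹ ∈ normalizer (K : Set G) :=
    mem_normalizer_fintype fun k hk => by simpa using h g hg k hk
  simpa using inv_mem hg'

lemma Subgroup.zpowers_normal_of_forall_conj_mem {G : Type*} [Group G] [Finite G] {a : G}
    {S : Set G} (hS : closure S = ⊤) (h : ∀ g ∈ S, ∃ k : ℤ, g⁻¹ * a * g = a ^ k) :
    (zpowers a).Normal :=
  normal_of_forall_conj_mem hS fun g hg b hb => by
    obtain ⟨n, rfl⟩ := mem_zpowers_iff.mp hb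
    obtain ⟨k, hk⟩ := h g hg
    refine mem_zpowers_iff.mpr ⟨k * n, ?_⟩
    rw [zpow_mul, ← hk]
    simpa using conj_zpow (a := g⁻¹) (b := a) (i := n)

lemma normal_zpowers_of_relations {G : Type*} [Group G] [Finite G] {x y z w : G}
    {r₁ r₂ q₁ q₂ : ℤ} (hgen : Subgroup.closure {x, y, z, w} = ⊤) (hxz : x * z = z * x)
    (hyx : y⁻¹ * x * y = x ^ r₁) (hwx : w⁻¹ * x * w = x ^ r₂)
    (hyz : y⁻¹ * z * y = z ^ q₁) (hwz : w⁻¹ * z * w = z ^ q₂) :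
    (Subgroup.zpowers x).Normal ∧ (Subgroup.zpowers z).Normal := by
  constructor <;> refine Subgroup.zpowers_normal_of_forall_conj_mem hgen ?_ <;>
    simp only [Set.mem_insert_iff, Set.mem_singleton_iff] <;> rintro g (rfl | rfl | rfl | rfl)
  exacts [⟨1, by group⟩, ⟨r₁, hyx⟩, ⟨1, by rw [mul_assoc, hxz, inv_mul_cancel_left, zpow_one]⟩,
    ⟨r₂, hwx⟩, ⟨1, by rw [mul_assoc, ← hxz, inv_mul_cancel_left, zpow_one]⟩, ⟨q₁, hyz⟩,
    ⟨1, by group⟩, ⟨q₂, hwz⟩]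

/-- The data of a group `G` generated by `A` and two involutions `y`, `w` that act on `A` by `Y`
and `W` and satisfy `w⁻¹ y w = y u`; then `G / A` is a Klein four-group. -/
structure KleinExtensionData (A : Type*) [CommGroup A] where
  Y : MulAut A
  W : MulAut A
  u : A
  Y_involutive : Function.Involutive Y
  W_involutive : Function.Involutive W
  Y_W : ∀ v, Y (W v) = W (Y v)
  Y_u : Y u = u⁻¹
  W_u : W u = u⁻¹

namespace KleinExtensionData

variable {A : Type*} [CommGroup A] (D : KleinExtensionData A)

lemma Y_mul_self : D.Y * D.Y = 1 := MulEquiv.ext D.Y_involutive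

@[simp] lemma Y_symm : D.Y.symm = D.Y :=
  MulEquiv.ext fun v => D.Y.symm_apply_eq.mpr (D.Y_involutive v).symm

abbrev H := A ⋊[involutionHom D.Y D.Y_mul_self] Multiplicative (ZMod 2)

/-- Conjugation by `w`: `W` on `A`, and `y ↦ u⁻¹ y`. -/
def wMap (h : D.H) : D.H := ⟨D.W h.left * (D.u ^ h.right.toAdd.val)⁻¹, h.right⟩

lemma wMap_involutive : Function.Involutive D.wMap := fun h => by
  ext
  · simp only [wMap, map_mul, map_inv, map_pow, D.W_u, D.W_involutive h.left, inv_pow, inv_inv,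
      mul_inv_cancel_right]
  · rfl

lemma wMap_mul (h h' : D.H) : D.wMap (h * h') = D.wMap h * D.wMap h' := by
  obtain ⟨v, e⟩ := h
  obtain ⟨v', e'⟩ := h'
  ext
  · rcases e.zmod_two_eq_one_or with rfl | rfl <;> rcases e'.zmod_two_eq_one_or with rfl | rfl <;>
      simp [wMap, ← ofAdd_add, show (1 + 1 : ZMod 2) = 0 from rfl, ZMod.val_one, D.Y_W, D.Y_u,
        mul_comm, mul_left_comm]
  · rfl

def wAut : MulAut D.H := ⟨D.wMap_involutive.toPerm, D.wMap_mul⟩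

lemma wAut_mul_self : D.wAut * D.wAut = 1 := MulEquiv.ext D.wMap_involutive

@[simp] lemma wAut_symm : D.wAut.symm = D.wAut :=
  MulEquiv.ext fun h => D.wAut.symm_apply_eq.mpr (D.wMap_involutive h).symm

lemma wAut_apply (h : D.H) : D.wAut h = D.wMap h := rfl

@[simp] lemma wAut_inl (v : A) : D.wAut (inl v) = inl (D.W v) := by
  ext <;> simp [wAut_apply, wMap]

abbrev G := D.H ⋊[involutionHom D.wAut D.wAut_mul_self] Multiplicative (ZMod 2)

def ι : A →* D.G := inl.comp inl

def y : D.G := inl (inr (ofAdd 1))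

def w : D.G := inr (ofAdd 1)

lemma card_G : Nat.card D.G = Nat.card A * 4 := by
  simp [mul_assoc]

lemma ι_injective : Function.Injective D.ι := inl_injective.comp inl_injective

lemma orderOf_y : orderOf D.y = 2 := by
  rw [y, orderOf_injective _ inl_injective, orderOf_injective _ inr_injective]
  simp

lemma orderOf_w : orderOf D.w = 2 := by
  rw [w, orderOf_injective _ inr_injective]
  simp

@[simp] lemma y_inv_mul_ι_mul_y (v : A) : D.y⁻¹ * D.ι v * D.y = D.ι (D.Y v) := by
  ext <;> simp [y, ι]

@[simp] lemma w_inv_mul_ι_mul_w (v : A) : D.w⁻¹ * D.ι v * D.w = D.ι (D.W v) := by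
  ext <;> simp [w, ι]

@[simp] lemma w_inv_mul_y_mul_w : D.w⁻¹ * D.y * D.w = D.y * D.ι D.u := by
  ext <;> simp [w, y, ι, wAut_apply, wMap, ZMod.val_one, D.Y_u]

section Embeddings

variable {B C : Type*} [Group B] [Group C]
  (j : B →* A) {Y' : MulAut B} (hY' : Y' * Y' = 1) (hjY : ∀ b, j (Y' b) = D.Y (j b))
  (k : C →* A) {W' : MulAut C} (hW' : W' * W' = 1) (hkW : ∀ c, k (W' c) = D.W (k c))

def yEmbedding : B ⋊[involutionHom Y' hY'] Multiplicative (ZMod 2) →* D.G :=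
  inl.comp (map j (MonoidHom.id _) (j.comp_involutionHom hY' D.Y_mul_self hjY))

def wEmbedding : C ⋊[involutionHom W' hW'] Multiplicative (ZMod 2) →* D.G :=
  map (inl.comp k) (MonoidHom.id _)
    ((inl.comp k).comp_involutionHom hW' D.wAut_mul_self (by simp [hkW]))

lemma yEmbedding_injective (hj : Function.Injective j) :
    Function.Injective (D.yEmbedding j hY' hjY) := fun _ _ hpq =>
  SemidirectProduct.ext (hj congr(($hpq).left.left)) congr(($hpq).left.right)

lemma wEmbedding_injective (hk : Function.Injective k) :
    Function.Injective (D.wEmbedding k hW' hkW) := fun _ _ hpq =>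
  SemidirectProduct.ext (hk congr(($hpq).left.left)) congr(($hpq).right)

lemma card_range_yEmbedding (hj : Function.Injective j) :
    Nat.card (D.yEmbedding j hY' hjY).range = Nat.card B * 2 := by
  rw [← Nat.card_congr (MonoidHom.ofInjective (D.yEmbedding_injective j hY' hjY hj)).toEquiv]
  simp

lemma card_range_wEmbedding (hk : Function.Injective k) :
    Nat.card (D.wEmbedding k hW' hkW).range = Nat.card C * 2 := by
  rw [← Nat.card_congr (MonoidHom.ofInjective (D.wEmbedding_injective k hW' hkW hk)).toEquiv]
  simp

lemma range_yEmbedding {b₀ : B} (hb₀ : Subgroup.zpowers b₀ = ⊤) :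
    (D.yEmbedding j hY' hjY).range = Subgroup.closure {D.ι (j b₀), D.y} := by
  rw [MonoidHom.range_eq_map, ← closure_image_inl_union_image_inr (s := {b₀})
    (t := {ofAdd 1}) (by rw [← Subgroup.zpowers_eq_closure, hb₀])
    (by rw [← Subgroup.zpowers_eq_closure, zpowers_ofAdd_one]), MonoidHom.map_closure,
    Set.image_singleton, Set.image_singleton, Set.singleton_union, Set.image_pair]
  simp [yEmbedding, ι, y, Set.pair_comm]

lemma range_wEmbedding {c₀ : C} (hc₀ : Subgroup.zpowers c₀ = ⊤) :
    (D.wEmbedding k hW' hkW).range = Subgroup.closure {D.ι (k c₀), D.w} := by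
  rw [MonoidHom.range_eq_map, ← closure_image_inl_union_image_inr (s := {c₀})
    (t := {ofAdd 1}) (by rw [← Subgroup.zpowers_eq_closure, hc₀])
    (by rw [← Subgroup.zpowers_eq_closure, zpowers_ofAdd_one]), MonoidHom.map_closure,
    Set.image_singleton, Set.image_singleton, Set.singleton_union, Set.image_pair]
  simp [wEmbedding, ι, w]

lemma range_yEmbedding_inf_range_wEmbedding (hjk : ∀ b c, j b = k c → b = 1) :
    (D.yEmbedding j hY' hjY).range ⊓ (D.wEmbedding k hW' hkW).range = ⊥ := by
  rw [eq_bot_iff]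
  rintro _ ⟨⟨p, rfl⟩, ⟨q, hqp⟩⟩
  have hp : p = 1 :=
    SemidirectProduct.ext (hjk _ _ congr(($hqp).left.left).symm) congr(($hqp).left.right).symm
  simp [hp]

lemma range_yEmbedding_sup_range_wEmbedding (hjk : ∀ v, ∃ b c, j b * k c = v) :
    (D.yEmbedding j hY' hjY).range ⊔ (D.wEmbedding k hW' hkW).range = ⊤ := by
  refine eq_top_iff.mpr fun g _ => ?_
  obtain ⟨b, c, hv⟩ := hjk g.left.left
  have hg : g = D.wEmbedding k hW' hkW (inl c) * D.yEmbedding j hY' hjY ⟨b, g.left.right⟩ *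
      D.wEmbedding k hW' hkW (inr g.right) := by
    ext <;> simp [yEmbedding, wEmbedding, ← hv, mul_comm]
  rw [hg]
  exact mul_mem (mul_mem (Subgroup.mem_sup_right ⟨_, rfl⟩) (Subgroup.mem_sup_left ⟨_, rfl⟩))
    (Subgroup.mem_sup_right ⟨_, rfl⟩)

end Embeddings

section Product

variable {X Z : Type*} [CommGroup X] [CommGroup Z] (D : KleinExtensionData (X × Z))
  {Y₁ : MulAut X} {W₂ : MulAut Z} {x₀ : X} {z₀ : Z}

lemma range_yEmbedding_inl (hY₁ : Y₁ * Y₁ = 1) (hY : ∀ a, D.Y (a, 1) = (Y₁ a, 1))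
    (hx₀ : Subgroup.zpowers x₀ = ⊤) :
    (D.yEmbedding (MonoidHom.inl X Z) hY₁ fun a => (hY a).symm).range =
      Subgroup.closure {D.ι (x₀, 1), D.y} :=
  D.range_yEmbedding _ _ _ hx₀

lemma range_wEmbedding_inr (hW₂ : W₂ * W₂ = 1) (hW : ∀ b, D.W (1, b) = (1, W₂ b))
    (hz₀ : Subgroup.zpowers z₀ = ⊤) :
    (D.wEmbedding (MonoidHom.inr X Z) hW₂ fun b => (hW b).symm).range =
      Subgroup.closure {D.ι (1, z₀), D.w} :=
  D.range_wEmbedding _ _ _ hz₀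

lemma card_closure_x_y (hY₁ : Y₁ * Y₁ = 1) (hY : ∀ a, D.Y (a, 1) = (Y₁ a, 1))
    (hx₀ : Subgroup.zpowers x₀ = ⊤) :
    Nat.card (Subgroup.closure {D.ι (x₀, 1), D.y}) = Nat.card X * 2 := by
  rw [← D.range_yEmbedding_inl hY₁ hY hx₀]
  exact D.card_range_yEmbedding _ _ _ (Prod.mk_left_injective 1)

lemma card_closure_z_w (hW₂ : W₂ * W₂ = 1) (hW : ∀ b, D.W (1, b) = (1, W₂ b))
    (hz₀ : Subgroup.zpowers z₀ = ⊤) :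
    Nat.card (Subgroup.closure {D.ι (1, z₀), D.w}) = Nat.card Z * 2 := by
  rw [← D.range_wEmbedding_inr hW₂ hW hz₀]
  exact D.card_range_wEmbedding _ _ _ (Prod.mk_right_injective 1)

lemma closure_x_y_inf_closure_z_w (hY₁ : Y₁ * Y₁ = 1) (hY : ∀ a, D.Y (a, 1) = (Y₁ a, 1))
    (hW₂ : W₂ * W₂ = 1) (hW : ∀ b, D.W (1, b) = (1, W₂ b))
    (hx₀ : Subgroup.zpowers x₀ = ⊤) (hz₀ : Subgroup.zpowers z₀ = ⊤) :
    Subgroup.closure {D.ι (x₀, 1), D.y} ⊓ Subgroup.closure {D.ι (1, z₀), D.w} = ⊥ := by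
  rw [← D.range_yEmbedding_inl hY₁ hY hx₀, ← D.range_wEmbedding_inr hW₂ hW hz₀]
  exact D.range_yEmbedding_inf_range_wEmbedding _ _ _ _ _ _ fun _ _ h => congr(($h).1)

lemma closure_x_y_z_w (hY₁ : Y₁ * Y₁ = 1) (hY : ∀ a, D.Y (a, 1) = (Y₁ a, 1))
    (hW₂ : W₂ * W₂ = 1) (hW : ∀ b, D.W (1, b) = (1, W₂ b))
    (hx₀ : Subgroup.zpowers x₀ = ⊤) (hz₀ : Subgroup.zpowers z₀ = ⊤) :
    Subgroup.closure {D.ι (x₀, 1), D.y, D.ι (1, z₀), D.w} = ⊤ := by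
  rw [← Set.singleton_union (a := D.y), ← Set.insert_union, Subgroup.closure_union,
    ← D.range_yEmbedding_inl hY₁ hY hx₀, ← D.range_wEmbedding_inr hW₂ hW hz₀]
  exact D.range_yEmbedding_sup_range_wEmbedding _ _ _ _ _ _ fun v => ⟨v.1, v.2, by simp⟩

end Product

end KleinExtensionData

section PowerMaps

variable {X Z : Type*} [CommGroup X] [CommGroup Z]

lemma zpow_zpow_of_mul_self_modEq {r : ℤ} (hr : r * r ≡ 1 [ZMOD Nat.card X]) (x : X) :
    (x ^ r) ^ r = x := by
  rw [← zpow_mul, zpow_eq_zpow_of_modEq_natCard x hr, zpow_one]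

lemma zpow_zpow_of_mul_one_add_modEq {r t : ℤ} (h : t * (1 + r) ≡ 0 [ZMOD Nat.card X]) (x : X) :
    (x ^ t) ^ r = (x ^ t)⁻¹ := by
  rw [← zpow_mul, ← zpow_neg]
  refine zpow_eq_zpow_of_modEq_natCard x ?_
  rw [Int.modEq_iff_dvd] at h ⊢
  convert h using 1
  ring

def zpowMulAut (r : ℤ) (hr : r * r ≡ 1 [ZMOD Nat.card X]) : MulAut X :=
  { zpowGroupHom r with
    invFun := (· ^ r)
    left_inv := zpow_zpow_of_mul_self_modEq hr
    right_inv := zpow_zpow_of_mul_self_modEq hr }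

@[simp] lemma zpowMulAut_apply {r : ℤ} (hr : r * r ≡ 1 [ZMOD Nat.card X]) (x : X) :
    zpowMulAut r hr x = x ^ r := rfl

lemma zpowMulAut_mul_self {r : ℤ} (hr : r * r ≡ 1 [ZMOD Nat.card X]) :
    zpowMulAut r hr * zpowMulAut r hr = 1 :=
  MulEquiv.ext (zpow_zpow_of_mul_self_modEq hr)

@[simps]
def KleinExtensionData.ofModEq (x₀ : X) (z₀ : Z) {r₁ r₂ t q₁ q₂ c : ℤ}
    (hr₁ : r₁ * r₁ ≡ 1 [ZMOD Nat.card X]) (hr₂ : r₂ * r₂ ≡ 1 [ZMOD Nat.card X])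
    (hq₁ : q₁ * q₁ ≡ 1 [ZMOD Nat.card Z]) (hq₂ : q₂ * q₂ ≡ 1 [ZMOD Nat.card Z])
    (ht₁ : t * (1 + r₁) ≡ 0 [ZMOD Nat.card X]) (ht₂ : t * (1 + r₂) ≡ 0 [ZMOD Nat.card X])
    (hc₁ : c * (1 + q₁) ≡ 0 [ZMOD Nat.card Z]) (hc₂ : c * (1 + q₂) ≡ 0 [ZMOD Nat.card Z]) :
    KleinExtensionData (X × Z) where
  Y := (zpowMulAut r₁ hr₁).prodCongr (zpowMulAut q₁ hq₁)
  W := (zpowMulAut r₂ hr₂).prodCongr (zpowMulAut q₂ hq₂)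
  u := (x₀ ^ t, z₀ ^ c)
  Y_involutive v :=
    Prod.ext (zpow_zpow_of_mul_self_modEq hr₁ v.1) (zpow_zpow_of_mul_self_modEq hq₁ v.2)
  W_involutive v :=
    Prod.ext (zpow_zpow_of_mul_self_modEq hr₂ v.1) (zpow_zpow_of_mul_self_modEq hq₂ v.2)
  Y_W v := Prod.ext (zpow_comm v.1 r₂ r₁) (zpow_comm v.2 q₂ q₁)
  Y_u := Prod.ext (zpow_zpow_of_mul_one_add_modEq ht₁ x₀) (zpow_zpow_of_mul_one_add_modEq hc₁ z₀)
  W_u := Prod.ext (zpow_zpow_of_mul_one_add_modEq ht₂ x₀) (zpow_zpow_of_mul_one_add_modEq hc₂ z₀)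

end PowerMaps

open Subgroup in
theorem exists_exactProduct_of_modEq (N M : ℕ) [NeZero N] [NeZero M] {r₁ r₂ t q₁ q₂ c : ℤ}
    (hr₁ : r₁ * r₁ ≡ 1 [ZMOD N]) (hr₂ : r₂ * r₂ ≡ 1 [ZMOD N])
    (hq₁ : q₁ * q₁ ≡ 1 [ZMOD M]) (hq₂ : q₂ * q₂ ≡ 1 [ZMOD M])
    (ht₁ : t * (1 + r₁) ≡ 0 [ZMOD N]) (ht₂ : t * (1 + r₂) ≡ 0 [ZMOD N])
    (hc₁ : c * (1 + q₁) ≡ 0 [ZMOD M]) (hc₂ : c * (1 + q₂) ≡ 0 [ZMOD M]) :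
    ∃ (G : Type) (_ : Group G) (x y z w : G),
      Nat.card G = N * M * 4 ∧
      orderOf x = N ∧ orderOf y = 2 ∧ orderOf z = M ∧ orderOf w = 2 ∧
      y⁻¹ * x * y = x ^ r₁ ∧ w⁻¹ * z * w = z ^ q₂ ∧ x * z = z * x ∧
      y⁻¹ * z * y = z ^ q₁ ∧ w⁻¹ * x * w = x ^ r₂ ∧ w⁻¹ * y * w = y * x ^ t * z ^ c ∧
      closure {x, y, z, w} = ⊤ ∧
      Nat.card (closure {x, y}) = N * 2 ∧ Nat.card (closure {z, w}) = M * 2 ∧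
      closure {x, y} ⊓ closure {z, w} = ⊥ ∧
      (zpowers x).Normal ∧ (zpowers z).Normal := by
  have hX : Nat.card (Multiplicative (ZMod N)) = N := by simp
  have hZ : Nat.card (Multiplicative (ZMod M)) = M := by simp
  rw [← hX] at hr₁ hr₂ ht₁ ht₂
  rw [← hZ] at hq₁ hq₂ hc₁ hc₂
  set D := KleinExtensionData.ofModEq (ofAdd 1) (ofAdd 1) hr₁ hr₂ hq₁ hq₂ ht₁ ht₂ hc₁ hc₂
  have hY (a) : D.Y (a, 1) = (zpowMulAut r₁ hr₁ a, 1) := by simp [D]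
  have hW (b) : D.W (1, b) = (1, zpowMulAut q₂ hq₂ b) := by simp [D]
  have hgen := D.closure_x_y_z_w (zpowMulAut_mul_self hr₁) hY (zpowMulAut_mul_self hq₂) hW
    (zpowers_ofAdd_one N) (zpowers_ofAdd_one M)
  set x := D.ι (ofAdd 1, 1)
  set z := D.ι (1, ofAdd 1)
  have : Finite D.G := Nat.finite_of_card_ne_zero (by simp [D.card_G, NeZero.ne])
  have hxz : x * z = z * x := by rw [← map_mul, ← map_mul, mul_comm]
  have hyx : D.y⁻¹ * x * D.y = x ^ r₁ := by simp [x, D, ← map_zpow]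
  have hyz : D.y⁻¹ * z * D.y = z ^ q₁ := by simp [z, D, ← map_zpow]
  have hwx : D.w⁻¹ * x * D.w = x ^ r₂ := by simp [x, D, ← map_zpow]
  have hwz : D.w⁻¹ * z * D.w = z ^ q₂ := by simp [z, D, ← map_zpow]
  refine ⟨D.G, inferInstance, x, D.y, z, D.w, by simp [D.card_G, mul_assoc], ?_, D.orderOf_y, ?_,
    D.orderOf_w, hyx, hwz, hxz, hyz, hwx, ?_, hgen, ?_, ?_, ?_,
    normal_zpowers_of_relations hgen hxz hyx hwx hyz hwz⟩
  · simp [x, orderOf_injective D.ι D.ι_injective, Prod.orderOf_mk]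
  · simp [z, orderOf_injective D.ι D.ι_injective, Prod.orderOf_mk]
  · rw [D.w_inv_mul_y_mul_w]
    simp [x, z, D, mul_assoc, ← map_zpow, ← map_mul]
  · simpa using D.card_closure_x_y (zpowMulAut_mul_self hr₁) hY (zpowers_ofAdd_one N)
  · simpa using D.card_closure_z_w (zpowMulAut_mul_self hq₂) hW (zpowers_ofAdd_one M)
  · exact D.closure_x_y_inf_closure_z_w (zpowMulAut_mul_self hr₁) hY (zpowMulAut_mul_self hq₂) hW
      (zpowers_ofAdd_one N) (zpowers_ofAdd_one M)

lemma two_pow_sub_one_mul_self_modEq {n : ℕ} (hn : 3 ≤ n) :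
    ((2 : ℤ) ^ (n - 2) - 1) * ((2 : ℤ) ^ (n - 2) - 1) ≡ 1 [ZMOD 2 ^ (n - 1)] := by
  obtain ⟨k, rfl⟩ := Nat.exists_eq_add_of_le hn
  rw [show 3 + k - 2 = k + 1 by omega, show 3 + k - 1 = k + 2 by omega, Int.modEq_iff_dvd]
  exact ⟨1 - 2 ^ k, by ring⟩

/-- Sufficiency direction of Theorem A (Theorem 4.1): every tuple `(a, s, t, c)`
satisfying the six congruences (C1)–(C6) gives rise to an exact product of
`SD_{2^n}` and `SD_{2^m}` of order `2^(n+m)` in which `⟨x⟩` and `⟨z⟩` are normal. -/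
theorem stmt_1 (n m : ℕ) (hn : 4 ≤ n) (hm : 4 ≤ m) (a s t c : ℤ)
    (hC1 : (1 + a) ^ 2 ≡ 1 [ZMOD (2 : ℤ) ^ (m - 1)])
    (hC2 : (1 + s) ^ 2 ≡ 1 [ZMOD (2 : ℤ) ^ (n - 1)])
    (hC3 : t * (2 + s) ≡ 0 [ZMOD (2 : ℤ) ^ (n - 1)])
    (hC4 : c * (1 + ((2 : ℤ) ^ (m - 2) - 1)) ≡ 0 [ZMOD (2 : ℤ) ^ (m - 1)])
    (hC5 : t * (1 + ((2 : ℤ) ^ (n - 2) - 1)) ≡ 0 [ZMOD (2 : ℤ) ^ (n - 1)])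
    (hC6 : c * (2 + a) ≡ 0 [ZMOD (2 : ℤ) ^ (m - 1)]) :
    ∃ (G : Type) (_ : Group G) (x y z w : G),
      Nat.card G = 2 ^ (n + m) ∧
      orderOf x = 2 ^ (n - 1) ∧ orderOf y = 2 ∧
      orderOf z = 2 ^ (m - 1) ∧ orderOf w = 2 ∧
      y⁻¹ * x * y = x ^ ((2 : ℤ) ^ (n - 2) - 1) ∧
      w⁻¹ * z * w = z ^ ((2 : ℤ) ^ (m - 2) - 1) ∧
      x * z = z * x ∧
      y⁻¹ * z * y = z ^ (1 + a) ∧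
      w⁻¹ * x * w = x ^ (1 + s) ∧
      w⁻¹ * y * w = y * x ^ t * z ^ c ∧
      Subgroup.closure {x, y, z, w} = ⊤ ∧
      Nat.card (Subgroup.closure {x, y}) = 2 ^ n ∧
      Nat.card (Subgroup.closure {z, w}) = 2 ^ m ∧
      Subgroup.closure {x, y} ⊓ Subgroup.closure {z, w} = ⊥ ∧
      (Subgroup.zpowers x).Normal ∧ (Subgroup.zpowers z).Normal := by
  obtain ⟨G, _, x, y, z, w, hcard, hx, hy, hz, hw, hyx, hwz, hxz, hyz, hwx, hwy, hgen, hxy, hzw,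
      hinf, hnx, hnz⟩ :=
    exists_exactProduct_of_modEq (2 ^ (n - 1)) (2 ^ (m - 1))
      (by push_cast; exact two_pow_sub_one_mul_self_modEq (by omega))
      (by push_cast; rw [← sq]; exact hC2) (by push_cast; rw [← sq]; exact hC1)
      (by push_cast; exact two_pow_sub_one_mul_self_modEq (by omega)) (by push_cast; exact hC5)
      (by push_cast; convert hC3 using 2; ring) (by push_cast; convert hC6 using 2; ring)
      (by push_cast; exact hC4)
  refine ⟨G, inferInstance, x, y, z, w, ?_, hx, hy, hz, hw, hyx, hwz, hxz, hyz, hwx, hwy, hgen, ?_,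
    ?_, hinf, hnx, hnz⟩
  · rw [hcard, show 4 = 2 ^ 2 from rfl, ← pow_add, ← pow_add]
    congr 1
    omega
  · rw [hxy, ← pow_succ, Nat.sub_add_cancel (by omega)]
  · rw [hzw, ← pow_succ, Nat.sub_add_cancel (by omega)]
end

section
/- Let n, m ≥ 4 be integers and set N = 2^(n-1), M = 2^(m-1), α = 2^(n-2) - 1, β = 2^(m-2) - 1. Let G be a group and x, y, z, w ∈ G such that: orderOf x = N, orderOf z = M, y^2 = 1, w^2 = 1, y⁻¹ * x * y = x^α, w⁻¹ * z * w = z^β, x * z = z * x, and for integers r, a, s, b, t, c one has y⁻¹ * z * y = x^r * z^(1+a), w⁻¹ * x * w = x^(1+s) * z^b, and w⁻¹ * y * w = y * x^t * z^c. Assume moreover Subgroup.zpowers x ⊓ Subgroup.zpowers z = ⊥. Then the following twelve congruences of integers hold: r·(α+1+a) ≡ 0 (mod N); (1+a)^2 ≡ 1 (mod M); (1+s)^2 ≡ 1 (mod N); b·(1+s+β) ≡ 0 (mod M); r·(β−1−s) ≡ 0 (mod N); b·r ≡ 0 (mod M); b·(α−1−a) ≡ 0 (mod M); r·b ≡ 0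 (mod N); t·(2+s) ≡ 0 (mod N); c·(1+β) + t·b ≡ 0 (mod M); t·(1+α) + c·r ≡ 0 (mod N); and c·(2+a) ≡ 0 (mod M). -/
/-!
Since `x` and `z` commute and `⟨x⟩ ⊓ ⟨z⟩ = ⊥`, every element of `⟨x⟩⟨z⟩` is `x ^ i * z ^ j` with
`(i, j)` unique modulo `(orderOf x, orderOf z)`, and conjugation by `y` or by `w` acts on these
exponent vectors by the integer matrices `Y`, `W` read off from the conjugation data. The twelve
congruences are entries of four matrix identities: `Y² = 1` and `W² = 1` (from `y² = w² = 1`),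
`YW = WY` (because `y * w = w * y * x ^ t * z ^ c` and `⟨x⟩⟨z⟩` is abelian), and the two relations
`(1 + W)(t, c) = 0` and `(Y + 1)(t, c) = 0`, which come from `w² = 1` and `(w⁻¹ * y * w)² = 1`.
-/

theorem Int.ModEq.of_sub_eq_sub {n a b c d : ℤ} (h : a ≡ b [ZMOD n]) (e : c - d = a - b) :
    c ≡ d [ZMOD n] :=
  Int.modEq_iff_dvd.2 <| by rw [show d - c = b - a by linarith]; exact h.dvd

section Group

variable {G : Type*} [Group G]

theorem conj_conj_of_sq_eq_one {u : G} (hu : u ^ 2 = 1) (g : G) : u⁻¹ * (u⁻¹ * g * u) * u = g := by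
  have hu' : u⁻¹ = u := inv_eq_of_mul_eq_one_left (by rw [← sq, hu])
  rw [hu', ← mul_assoc, ← mul_assoc, ← sq, hu, one_mul, mul_assoc, ← sq, hu, mul_one]

theorem conj_conj_comm_of_conj_eq_mul {y w k g : G} (h : w⁻¹ * y * w = y * k)
    (hk : Commute k (y⁻¹ * (w⁻¹ * g * w) * y)) :
    w⁻¹ * (y⁻¹ * g * y) * w = y⁻¹ * (w⁻¹ * g * w) * y := by
  have hyw : y * w = w * (y * k) := by rw [← h]; group
  calc w⁻¹ * (y⁻¹ * g * y) * w = (y * w)⁻¹ * g * (y * w) := by group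
    _ = k⁻¹ * (y⁻¹ * (w⁻¹ * g * w) * y) * k := by rw [hyw]; group
    _ = y⁻¹ * (w⁻¹ * g * w) * y := by rw [mul_assoc, ← hk.eq, inv_mul_cancel_left]

theorem mul_conj_eq_one_of_conj_eq_mul {y w k : G} (hw : w ^ 2 = 1) (h : w⁻¹ * y * w = y * k) :
    k * (w⁻¹ * k * w) = 1 := by
  have := conj_conj_of_sq_eq_one hw y
  rw [h, show w⁻¹ * (y * k) * w = (w⁻¹ * y * w) * (w⁻¹ * k * w) by group, h, mul_assoc] at this
  exact mul_eq_left.mp this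

theorem conj_mul_eq_one_of_conj_eq_mul {y w k : G} (hy : y ^ 2 = 1) (h : w⁻¹ * y * w = y * k) :
    y⁻¹ * k * y * k = 1 := by
  have hy' : y⁻¹ = y := inv_eq_of_mul_eq_one_left (by rw [← sq, hy])
  have : (y * k) ^ 2 = 1 := by
    rw [← h, sq, show w⁻¹ * y * w * (w⁻¹ * y * w) = w⁻¹ * (y * y) * w by group, ← sq, hy]
    group
  rw [hy', ← this, sq, ← mul_assoc]

end Group

section CommutingPair

variable {G : Type*} [Group G] {x z : G}

theorem Commute.zpow_mul_zpow_mul (h : Commute x z) (i j k l : ℤ) :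
    x ^ i * z ^ j * (x ^ k * z ^ l) = x ^ (i + k) * z ^ (j + l) := by
  rw [mul_assoc, ← mul_assoc (z ^ j), ((h.zpow_zpow k j).symm).eq, zpow_add, zpow_add]; group

theorem Commute.zpow_mul_zpow_zpow (h : Commute x z) (i j k : ℤ) :
    (x ^ i * z ^ j) ^ k = x ^ (i * k) * z ^ (j * k) := by
  rw [(h.zpow_zpow i j).mul_zpow, zpow_mul, zpow_mul]

theorem Commute.zpow_mul_zpow_commute (h : Commute x z) (i j k l : ℤ) :
    Commute (x ^ i * z ^ j) (x ^ k * z ^ l) := by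
  rw [Commute, SemiconjBy, h.zpow_mul_zpow_mul, h.zpow_mul_zpow_mul, add_comm i, add_comm j]

theorem Commute.conj_zpow_mul_zpow (h : Commute x z) {u : G} {p q p' q' : ℤ}
    (hux : u⁻¹ * x * u = x ^ p * z ^ q) (huz : u⁻¹ * z * u = x ^ p' * z ^ q') (i j : ℤ) :
    u⁻¹ * (x ^ i * z ^ j) * u = x ^ (p * i + p' * j) * z ^ (q * i + q' * j) := by
  have hconj (g : G) (k : ℤ) : u⁻¹ * g ^ k * u = (u⁻¹ * g * u) ^ k := by
    simpa using (conj_zpow (a := u⁻¹) (b := g) (i := k)).symm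
  rw [show u⁻¹ * (x ^ i * z ^ j) * u = (u⁻¹ * x ^ i * u) * (u⁻¹ * z ^ j * u) by group,
    hconj, hconj, hux, huz, h.zpow_mul_zpow_zpow, h.zpow_mul_zpow_zpow, h.zpow_mul_zpow_mul]

theorem modEq_zero_of_zpow_mul_zpow_eq_one (hbot : Subgroup.zpowers x ⊓ Subgroup.zpowers z = ⊥)
    {i j : ℤ} (h : x ^ i * z ^ j = 1) :
    i ≡ 0 [ZMOD orderOf x] ∧ j ≡ 0 [ZMOD orderOf z] := by
  have hxi : x ^ i = z ^ (-j) := by rw [zpow_neg]; exact eq_inv_of_mul_eq_one_left h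
  have hmem : x ^ i ∈ Subgroup.zpowers x ⊓ Subgroup.zpowers z :=
    ⟨⟨i, rfl⟩, ⟨-j, hxi.symm⟩⟩
  rw [hbot, Subgroup.mem_bot] at hmem
  rw [hmem, one_mul] at h
  exact ⟨(orderOf_dvd_iff_zpow_eq_one.2 hmem).modEq_zero_int,
    (orderOf_dvd_iff_zpow_eq_one.2 h).modEq_zero_int⟩

theorem Commute.modEq_of_zpow_mul_zpow_eq (h : Commute x z)
    (hbot : Subgroup.zpowers x ⊓ Subgroup.zpowers z = ⊥) {i j k l : ℤ}
    (hij : x ^ i * z ^ j = x ^ k * z ^ l) :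
    i ≡ k [ZMOD orderOf x] ∧ j ≡ l [ZMOD orderOf z] := by
  have : x ^ (i - k) * z ^ (j - l) = 1 := by
    rw [sub_eq_add_neg, sub_eq_add_neg, ← h.zpow_mul_zpow_mul, hij, h.zpow_mul_zpow_mul]
    simp
  obtain ⟨hi, hj⟩ := modEq_zero_of_zpow_mul_zpow_eq_one hbot this
  exact ⟨by simpa using hi.add_right k, by simpa using hj.add_right l⟩

theorem Commute.modEq_of_conj_of_sq_eq_one (h : Commute x z)
    (hbot : Subgroup.zpowers x ⊓ Subgroup.zpowers z = ⊥) {u : G} (hu : u ^ 2 = 1)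
    {p q p' q' : ℤ} (hux : u⁻¹ * x * u = x ^ p * z ^ q) (huz : u⁻¹ * z * u = x ^ p' * z ^ q') :
    p * p + p' * q ≡ 1 [ZMOD orderOf x] ∧ q * p + q' * q ≡ 0 [ZMOD orderOf z] ∧
      p * p' + p' * q' ≡ 0 [ZMOD orderOf x] ∧ q * p' + q' * q' ≡ 1 [ZMOD orderOf z] := by
  have hx := conj_conj_of_sq_eq_one hu x
  have hz := conj_conj_of_sq_eq_one hu z
  rw [hux, h.conj_zpow_mul_zpow hux huz] at hx
  rw [huz, h.conj_zpow_mul_zpow hux huz] at hz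
  obtain ⟨hxx, hxz⟩ :=
    h.modEq_of_zpow_mul_zpow_eq hbot (hx.trans (by simp : x = x ^ (1 : ℤ) * z ^ (0 : ℤ)))
  obtain ⟨hzx, hzz⟩ :=
    h.modEq_of_zpow_mul_zpow_eq hbot (hz.trans (by simp : z = x ^ (0 : ℤ) * z ^ (1 : ℤ)))
  exact ⟨hxx, hxz, hzx, hzz⟩

/-- The integer matrices by which `y` and `w` act on exponent vectors commute. -/
theorem Commute.modEq_of_conj_eq_mul (h : Commute x z)
    (hbot : Subgroup.zpowers x ⊓ Subgroup.zpowers z = ⊥) {y w : G}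
    {p₁ q₁ p₁' q₁' p₂ q₂ p₂' q₂' t c : ℤ}
    (hyx : y⁻¹ * x * y = x ^ p₁ * z ^ q₁) (hyz : y⁻¹ * z * y = x ^ p₁' * z ^ q₁')
    (hwx : w⁻¹ * x * w = x ^ p₂ * z ^ q₂) (hwz : w⁻¹ * z * w = x ^ p₂' * z ^ q₂')
    (hyw : w⁻¹ * y * w = y * (x ^ t * z ^ c)) :
    p₂ * p₁ + p₂' * q₁ ≡ p₁ * p₂ + p₁' * q₂ [ZMOD orderOf x] ∧
      q₂ * p₁ + q₂' * q₁ ≡ q₁ * p₂ + q₁' * q₂ [ZMOD orderOf z] ∧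
      p₂ * p₁' + p₂' * q₁' ≡ p₁ * p₂' + p₁' * q₂' [ZMOD orderOf x] ∧
      q₂ * p₁' + q₂' * q₁' ≡ q₁ * p₂' + q₁' * q₂' [ZMOD orderOf z] := by
  have hcomm {g : G} {i j : ℤ} (hg : w⁻¹ * g * w = x ^ i * z ^ j) :
      w⁻¹ * (y⁻¹ * g * y) * w = x ^ (p₁ * i + p₁' * j) * z ^ (q₁ * i + q₁' * j) := by
    have hk : Commute (x ^ t * z ^ c) (y⁻¹ * (w⁻¹ * g * w) * y) := by
      rw [hg, h.conj_zpow_mul_zpow hyx hyz]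
      exact h.zpow_mul_zpow_commute ..
    rw [conj_conj_comm_of_conj_eq_mul hyw hk, hg, h.conj_zpow_mul_zpow hyx hyz]
  have hx := hcomm hwx
  have hz := hcomm hwz
  rw [hyx, h.conj_zpow_mul_zpow hwx hwz] at hx
  rw [hyz, h.conj_zpow_mul_zpow hwx hwz] at hz
  obtain ⟨hxx, hxz⟩ := h.modEq_of_zpow_mul_zpow_eq hbot hx
  obtain ⟨hzx, hzz⟩ := h.modEq_of_zpow_mul_zpow_eq hbot hz
  exact ⟨hxx, hxz, hzx, hzz⟩

theorem Commute.add_conj_modEq_zero_of_sq_eq_one (h : Commute x z)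
    (hbot : Subgroup.zpowers x ⊓ Subgroup.zpowers z = ⊥) {y w : G} (hw : w ^ 2 = 1)
    {p q p' q' t c : ℤ} (hwx : w⁻¹ * x * w = x ^ p * z ^ q) (hwz : w⁻¹ * z * w = x ^ p' * z ^ q')
    (hyw : w⁻¹ * y * w = y * (x ^ t * z ^ c)) :
    t + (p * t + p' * c) ≡ 0 [ZMOD orderOf x] ∧ c + (q * t + q' * c) ≡ 0 [ZMOD orderOf z] := by
  have hk := mul_conj_eq_one_of_conj_eq_mul hw hyw
  rw [h.conj_zpow_mul_zpow hwx hwz, h.zpow_mul_zpow_mul] at hk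
  exact modEq_zero_of_zpow_mul_zpow_eq_one hbot hk

theorem Commute.conj_add_modEq_zero_of_sq_eq_one (h : Commute x z)
    (hbot : Subgroup.zpowers x ⊓ Subgroup.zpowers z = ⊥) {y w : G} (hy : y ^ 2 = 1)
    {p q p' q' t c : ℤ} (hyx : y⁻¹ * x * y = x ^ p * z ^ q) (hyz : y⁻¹ * z * y = x ^ p' * z ^ q')
    (hyw : w⁻¹ * y * w = y * (x ^ t * z ^ c)) :
    p * t + p' * c + t ≡ 0 [ZMOD orderOf x] ∧ q * t + q' * c + c ≡ 0 [ZMOD orderOf z] := by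
  have hk := conj_mul_eq_one_of_conj_eq_mul hy hyw
  rw [h.conj_zpow_mul_zpow hyx hyz, h.zpow_mul_zpow_mul] at hk
  exact modEq_zero_of_zpow_mul_zpow_eq_one hbot hk

end CommutingPair

theorem stmt_2_general (n m : ℕ)
    {G : Type*} [Group G] (x y z w : G) (r a s b t c : ℤ)
    (hx : orderOf x = 2 ^ (n - 1)) (hz : orderOf z = 2 ^ (m - 1))
    (hy : y ^ 2 = 1) (hw : w ^ 2 = 1)
    (hxy : y⁻¹ * x * y = x ^ ((2 : ℤ) ^ (n - 2) - 1))
    (hzw : w⁻¹ * z * w = z ^ ((2 : ℤ) ^ (m - 2) - 1))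
    (hxz : x * z = z * x)
    (hzy : y⁻¹ * z * y = x ^ r * z ^ (1 + a))
    (hxw : w⁻¹ * x * w = x ^ (1 + s) * z ^ b)
    (hyw : w⁻¹ * y * w = y * x ^ t * z ^ c)
    (hbot : Subgroup.zpowers x ⊓ Subgroup.zpowers z = ⊥) :
    r * (((2 : ℤ) ^ (n - 2) - 1) + 1 + a) ≡ 0 [ZMOD (2 : ℤ) ^ (n - 1)] ∧
    (1 + a) ^ 2 ≡ 1 [ZMOD (2 : ℤ) ^ (m - 1)] ∧
    (1 + s) ^ 2 ≡ 1 [ZMOD (2 : ℤ) ^ (n - 1)] ∧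
    b * (1 + s + ((2 : ℤ) ^ (m - 2) - 1)) ≡ 0 [ZMOD (2 : ℤ) ^ (m - 1)] ∧
    r * (((2 : ℤ) ^ (m - 2) - 1) - 1 - s) ≡ 0 [ZMOD (2 : ℤ) ^ (n - 1)] ∧
    b * r ≡ 0 [ZMOD (2 : ℤ) ^ (m - 1)] ∧
    b * (((2 : ℤ) ^ (n - 2) - 1) - 1 - a) ≡ 0 [ZMOD (2 : ℤ) ^ (m - 1)] ∧
    r * b ≡ 0 [ZMOD (2 : ℤ) ^ (n - 1)] ∧
    t * (2 + s) ≡ 0 [ZMOD (2 : ℤ) ^ (n - 1)] ∧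
    c * (1 + ((2 : ℤ) ^ (m - 2) - 1)) + t * b ≡ 0 [ZMOD (2 : ℤ) ^ (m - 1)] ∧
    t * (1 + ((2 : ℤ) ^ (n - 2) - 1)) + c * r ≡ 0 [ZMOD (2 : ℤ) ^ (n - 1)] ∧
    c * (2 + a) ≡ 0 [ZMOD (2 : ℤ) ^ (m - 1)] := by
  have hc : Commute x z := hxz
  have hyx : y⁻¹ * x * y = x ^ ((2 : ℤ) ^ (n - 2) - 1) * z ^ (0 : ℤ) := by simpa using hxy
  have hwz : w⁻¹ * z * w = x ^ (0 : ℤ) * z ^ ((2 : ℤ) ^ (m - 2) - 1) := by simpa using hzw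
  have hyw' : w⁻¹ * y * w = y * (x ^ t * z ^ c) := by rw [hyw, mul_assoc]
  obtain ⟨-, -, d1, d2⟩ := hc.modEq_of_conj_of_sq_eq_one hbot hy hyx hzy
  obtain ⟨d3, d4, -, -⟩ := hc.modEq_of_conj_of_sq_eq_one hbot hw hxw hwz
  obtain ⟨d8, d7, d5, d6⟩ := hc.modEq_of_conj_eq_mul hbot hyx hzy hxw hwz hyw'
  obtain ⟨d9, d10⟩ := hc.add_conj_modEq_zero_of_sq_eq_one hbot hw hxw hwz hyw'
  obtain ⟨d11, d12⟩ := hc.conj_add_modEq_zero_of_sq_eq_one hbot hy hyx hzy hyw'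
  have hN : (2 : ℤ) ^ (n - 1) = orderOf x := by rw [hx]; push_cast; rfl
  have hM : (2 : ℤ) ^ (m - 1) = orderOf z := by rw [hz]; push_cast; rfl
  rw [hN, hM]
  exact ⟨d1.of_sub_eq_sub (by ring), d2.of_sub_eq_sub (by ring), d3.of_sub_eq_sub (by ring),
    d4.of_sub_eq_sub (by ring), d5.symm.of_sub_eq_sub (by ring), d6.of_sub_eq_sub (by ring),
    d7.of_sub_eq_sub (by ring), d8.symm.of_sub_eq_sub (by ring), d9.of_sub_eq_sub (by ring),
    d10.of_sub_eq_sub (by ring), d11.of_sub_eq_sub (by ring), d12.of_sub_eq_sub (by ring)⟩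

/-- Necessity direction of Theorem B (Theorem 6.1): in an exact product of two
semidihedral groups with conjugation data `(r, a, s, b, t, c)` and `[x,z] = 1`,
the twelve congruences (D1)–(D12) hold. -/
theorem stmt_2 (n m : ℕ) (hn : 4 ≤ n) (hm : 4 ≤ m)
    {G : Type*} [Group G] (x y z w : G) (r a s b t c : ℤ)
    (hx : orderOf x = 2 ^ (n - 1)) (hz : orderOf z = 2 ^ (m - 1))
    (hy : y ^ 2 = 1) (hw : w ^ 2 = 1)
    (hxy : y⁻¹ * x * y = x ^ ((2 : ℤ) ^ (n - 2) - 1))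
    (hzw : w⁻¹ * z * w = z ^ ((2 : ℤ) ^ (m - 2) - 1))
    (hxz : x * z = z * x)
    (hzy : y⁻¹ * z * y = x ^ r * z ^ (1 + a))
    (hxw : w⁻¹ * x * w = x ^ (1 + s) * z ^ b)
    (hyw : w⁻¹ * y * w = y * x ^ t * z ^ c)
    (hbot : Subgroup.zpowers x ⊓ Subgroup.zpowers z = ⊥) :
    r * (((2 : ℤ) ^ (n - 2) - 1) + 1 + a) ≡ 0 [ZMOD (2 : ℤ) ^ (n - 1)] ∧
    (1 + a) ^ 2 ≡ 1 [ZMOD (2 : ℤ) ^ (m - 1)] ∧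
    (1 + s) ^ 2 ≡ 1 [ZMOD (2 : ℤ) ^ (n - 1)] ∧
    b * (1 + s + ((2 : ℤ) ^ (m - 2) - 1)) ≡ 0 [ZMOD (2 : ℤ) ^ (m - 1)] ∧
    r * (((2 : ℤ) ^ (m - 2) - 1) - 1 - s) ≡ 0 [ZMOD (2 : ℤ) ^ (n - 1)] ∧
    b * r ≡ 0 [ZMOD (2 : ℤ) ^ (m - 1)] ∧
    b * (((2 : ℤ) ^ (n - 2) - 1) - 1 - a) ≡ 0 [ZMOD (2 : ℤ) ^ (m - 1)] ∧
    r * b ≡ 0 [ZMOD (2 : ℤ) ^ (n - 1)] ∧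
    t * (2 + s) ≡ 0 [ZMOD (2 : ℤ) ^ (n - 1)] ∧
    c * (1 + ((2 : ℤ) ^ (m - 2) - 1)) + t * b ≡ 0 [ZMOD (2 : ℤ) ^ (m - 1)] ∧
    t * (1 + ((2 : ℤ) ^ (n - 2) - 1)) + c * r ≡ 0 [ZMOD (2 : ℤ) ^ (n - 1)] ∧
    c * (2 + a) ≡ 0 [ZMOD (2 : ℤ) ^ (m - 1)] :=
  stmt_2_general n m x y z w r a s b t c hx hz hy hw hxy hzw hxz hzy hxw hyw hbot
end

section
/- Let n, m ≥ 4 be integers and set N = 2^(n-1), M = 2^(m-1), α = 2^(n-2) - 1, β = 2^(m-2) - 1. Let n₁ and m₁ be powers of 2 with n₁ ∣ N and m₁ ∣ M. Let r, a, s, b, t, c be integers satisfying: (i) the twelve congruences r·(α+1+a) ≡ 0 (mod N), (1+a)^2 ≡ 1 (mod M), (1+s)^2 ≡ 1 (mod N), b·(1+s+β) ≡ 0 (mod M), r·(β−1−s) ≡ 0 (mod N), b·r ≡ 0 (mod M), b·(α−1−a) ≡ 0 (mod M), r·b ≡ 0 (mod N), t·(2+s) ≡ 0 (mod N), c·(1+β)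 + t·b ≡ 0 (mod M), t·(1+α) + c·r ≡ 0 (mod N), c·(2+a) ≡ 0 (mod M); (ii) the additive order of (r : ZMod N) equals m₁; and (iii) the additive order of (b : ZMod M) equals n₁. Then there exist a group G and elements x, y, z, w ∈ G such that: Nat.card G = 2^(n+m); orderOf x = N, orderOf y = 2, orderOf z = M, orderOf w = 2; y⁻¹ * x * y = x^α; w⁻¹ * z * w = z^β; x * z = z * x; y⁻¹ * z * y = x^r * z^(1+a); w⁻¹ * x * w = x^(1+s) * z^b; w⁻¹ * y * w = y * x^t * z^c; Subgroup.closure {x, y, z, w} = ⊤; Nat.card (Subgroup.closure {x, y}) = 2^n; Nat.card (Subgroup.closure {z, w}) = 2^m; Subgroup.closure {x, y} ⊓ Subgroup.closure {z, w} = ⊥; the normal core of Subgroup.zpowers x in G equals Subgroup.zpowers (x^n₁); and the normal core of Subgroup.zpowers z in G equals Subgroup.zpowers (z^m₁). -/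
/-!
The group is an extension of `A = ℤ/N × ℤ/M = ⟨x⟩ × ⟨z⟩` (with `N = 2^(n-1)`, `M = 2^(m-1)`) by
the Klein four-group `⟨y⟩ × ⟨w⟩`: conjugation by `y` and by `w` acts on `A` through the integer
matrices `[[α, r], [0, 1 + a]]` and `[[1 + s, 0], [b, β]]` (columns: images of `x` and `z`), and
`w⁻¹ y w = y g` with `g = x^t z^c`. Such an extension of order `4NM` exists as soon as these maps
are well defined on `A` (this is what the orders of `r` and `b` guarantee), are commuting
involutions, and both invert `g`; written out entrywise, these are the twelve congruences.
The core of `⟨x⟩` consists of the `x^i` whose conjugates by `y`, `w`, `yw` stay in `⟨x⟩`. Since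
`w⁻¹ x^i w = x^((1+s)i) z^(bi)`, this means `bi ≡ 0 mod M`, i.e. `n₁ ∣ i`; symmetrically for `⟨z⟩`.
-/

open Multiplicative Subgroup

theorem AddMonoidHom.mapsTo_zmultiples {A : Type*} [AddGroup A] {f : A →+ A} {q : A}
    (hq : f q ∈ AddSubgroup.zmultiples q) : ∀ p ∈ AddSubgroup.zmultiples q,
      f p ∈ AddSubgroup.zmultiples q := by
  rintro _ ⟨k, rfl⟩
  rw [map_zsmul]
  exact AddSubgroup.zsmul_mem _ hq k

theorem Subgroup.cond_mem {G : Type*} [Group G] {H : Subgroup G} {u : G} (hu : u ∈ H)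
    (e : Bool) : (bif e then u else 1) ∈ H := by
  cases e
  exacts [H.one_mem, hu]

theorem zsmul_mem_zmultiples_addOrderOf_nsmul_iff {G H : Type*} [AddGroup G] [AddGroup H]
    {u : G} {v : H} (h : addOrderOf v ∣ addOrderOf u) (I : ℤ) :
    I • u ∈ AddSubgroup.zmultiples (addOrderOf v • u) ↔ I • v = 0 := by
  rw [← addOrderOf_dvd_iff_zsmul_eq_zero, AddSubgroup.mem_zmultiples_iff]
  constructor
  · rintro ⟨L, hL⟩
    have hu : (addOrderOf u : ℤ) ∣ I - L * addOrderOf v := by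
      rw [addOrderOf_dvd_iff_zsmul_eq_zero, sub_zsmul, ← hL, mul_zsmul, natCast_zsmul,
        add_neg_cancel]
    exact (dvd_sub_left (dvd_mul_left _ L)).1 ((Int.natCast_dvd_natCast.2 h).trans hu)
  · rintro ⟨L, rfl⟩
    exact ⟨L, by rw [mul_comm, mul_zsmul, natCast_zsmul]⟩

theorem ZMod.addOrderOf_intCast_dvd_iff {N k : ℕ} {r : ℤ} :
    addOrderOf (r : ZMod N) ∣ k ↔ k * r ≡ 0 [ZMOD N] := by
  rw [addOrderOf_dvd_iff_nsmul_eq_zero, ← ZMod.intCast_eq_intCast_iff, nsmul_eq_mul]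
  push_cast
  rfl

structure KleinExtData (A : Type*) [AddCommGroup A] where
  F : A →+ A
  W : A →+ A
  g : A
  F_involutive : Function.Involutive F
  W_involutive : Function.Involutive W
  F_W_comm : ∀ p, F (W p) = W (F p)
  F_g : F g = -g
  W_g : W g = -g

namespace KleinExtData

variable {A : Type*} [AddCommGroup A] (D : KleinExtData A)

def act : Bool → Bool → A →+ A
  | false, false => AddMonoidHom.id A
  | true, false => D.F
  | false, true => D.W
  | true, true => D.F.comp D.W

theorem forall_act_mem_iff_of_F {B : AddSubgroup A} (hB : ∀ p ∈ B, D.F p ∈ B) {p : A} :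
    (∀ ey ew, D.act ey ew p ∈ B) ↔ p ∈ B ∧ D.W p ∈ B :=
  ⟨fun h => ⟨h false false, h false true⟩, fun ⟨hp, hWp⟩ ey ew => by
    cases ey <;> cases ew
    exacts [hp, hWp, hB _ hp, hB _ hWp]⟩

theorem forall_act_mem_iff_of_W {B : AddSubgroup A} (hB : ∀ p ∈ B, D.W p ∈ B) {p : A} :
    (∀ ey ew, D.act ey ew p ∈ B) ↔ p ∈ B ∧ D.F p ∈ B :=
  ⟨fun h => ⟨h false false, h true false⟩, fun ⟨hp, hFp⟩ ey ew => by
    cases ey <;> cases ew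
    exacts [hp, hB _ hp, hFp, (D.F_W_comm p).symm ▸ hB _ hFp]⟩

end KleinExtData

/-- `⟨p, ey, ew⟩` stands for `p * y ^ ey * w ^ ew`, where `y`, `w` act on `A` by `F`, `W` and
`w⁻¹ * y * w = y * g`. -/
@[ext]
structure KleinExt {A : Type*} [AddCommGroup A] (D : KleinExtData A) where
  a : A
  ey : Bool
  ew : Bool

namespace KleinExt

variable {A : Type*} [AddCommGroup A] {D : KleinExtData A}

/-- The element of `A` produced by moving `w ^ ew` past `y ^ ey'`, since `w * y = g⁻¹ * y * w`. -/
def cocycle (D : KleinExtData A) : Bool → Bool → Bool → A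
  | ey, ew, ey' => if ew && ey' then (if ey then D.g else -D.g) else 0

instance : Mul (KleinExt D) :=
  ⟨fun u v =>
    ⟨u.a + D.act u.ey u.ew v.a + cocycle D u.ey u.ew v.ey, xor u.ey v.ey, xor u.ew v.ew⟩⟩

instance : One (KleinExt D) := ⟨⟨0, false, false⟩⟩

instance : Inv (KleinExt D) :=
  ⟨fun u => ⟨D.act u.ey u.ew (-(u.a + cocycle D u.ey u.ew u.ey)), u.ey, u.ew⟩⟩

theorem mul_def (u v : KleinExt D) :
    u * v =
      ⟨u.a + D.act u.ey u.ew v.a + cocycle D u.ey u.ew v.ey, xor u.ey v.ey, xor u.ew v.ew⟩ :=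
  rfl

theorem one_def : (1 : KleinExt D) = ⟨0, false, false⟩ := rfl

theorem inv_def (u : KleinExt D) :
    u⁻¹ = ⟨D.act u.ey u.ew (-(u.a + cocycle D u.ey u.ew u.ey)), u.ey, u.ew⟩ := rfl

instance : Group (KleinExt D) := by
  refine Group.ofLeftAxioms ?_ ?_ ?_
  · rintro ⟨p₁, e₁, d₁⟩ ⟨p₂, e₂, d₂⟩ ⟨p₃, e₃, d₃⟩
    cases e₁ <;> cases d₁ <;> cases e₂ <;> cases d₂ <;> cases e₃ <;> cases d₃ <;>
      refine KleinExt.ext ?_ rfl rfl <;>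
      simp [mul_def, KleinExtData.act, cocycle, D.F_involutive _, D.W_involutive _, D.F_W_comm,
        D.F_g, D.W_g] <;>
      abel
  · rintro ⟨p, e, d⟩
    cases e <;> cases d <;> refine KleinExt.ext ?_ rfl rfl <;>
      simp [mul_def, one_def, KleinExtData.act, cocycle]
  · rintro ⟨p, e, d⟩
    cases e <;> cases d <;> refine KleinExt.ext ?_ rfl rfl <;>
      simp [mul_def, one_def, inv_def, KleinExtData.act, cocycle, D.F_g, D.W_g]

theorem card : Nat.card (KleinExt D) = Nat.card A * 4 := by
  rw [Nat.card_congr (⟨fun u => (u.a, u.ey, u.ew), fun v => ⟨v.1, v.2.1, v.2.2⟩,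
    fun _ => rfl, fun _ => rfl⟩ : KleinExt D ≃ A × Bool × Bool)]
  simp [Nat.card_prod]

def of (D : KleinExtData A) : Multiplicative A →* KleinExt D where
  toFun q := ⟨q.toAdd, false, false⟩
  map_one' := rfl
  map_mul' q q' := by ext <;> simp [mul_def, KleinExtData.act, cocycle]

theorem of_apply (q : Multiplicative A) : of D q = ⟨q.toAdd, false, false⟩ := rfl

theorem of_injective : Function.Injective (of D) := fun q q' h => by
  simpa [of_apply] using congrArg KleinExt.a h

def y (D : KleinExtData A) : KleinExt D := ⟨0, true, false⟩

def w (D : KleinExtData A) : KleinExt D := ⟨0, false, true⟩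

theorem y_mul_y : y D * y D = 1 := by ext <;> simp [y, mul_def, one_def, KleinExtData.act, cocycle]

theorem w_mul_w : w D * w D = 1 := by ext <;> simp [w, mul_def, one_def, KleinExtData.act, cocycle]

theorem orderOf_y : orderOf (y D) = 2 :=
  orderOf_eq_prime (by rw [sq, y_mul_y]) (by simp [y, one_def, KleinExt.ext_iff])

theorem orderOf_w : orderOf (w D) = 2 :=
  orderOf_eq_prime (by rw [sq, w_mul_w]) (by simp [w, one_def, KleinExt.ext_iff])

theorem conj_of (u : KleinExt D) (p : A) :
    u * of D (ofAdd p) * u⁻¹ = of D (ofAdd (D.act u.ey u.ew p)) := by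
  rw [mul_inv_eq_iff_eq_mul]
  ext
  · simp only [mul_def, of_apply, toAdd_ofAdd]
    cases u.ey <;> cases u.ew <;> simp [KleinExtData.act, cocycle, add_comm]
  all_goals simp [mul_def, of_apply]

theorem y_inv : (y D)⁻¹ = y D := inv_eq_of_mul_eq_one_right y_mul_y

theorem w_inv : (w D)⁻¹ = w D := inv_eq_of_mul_eq_one_right w_mul_w

theorem y_inv_mul_of_mul_y (p : A) : (y D)⁻¹ * of D (ofAdd p) * y D = of D (ofAdd (D.F p)) := by
  have h := conj_of (y D) p
  rw [y_inv] at h ⊢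
  exact h

theorem w_inv_mul_of_mul_w (p : A) : (w D)⁻¹ * of D (ofAdd p) * w D = of D (ofAdd (D.W p)) := by
  have h := conj_of (w D) p
  rw [w_inv] at h ⊢
  exact h

theorem w_inv_mul_y_mul_w : (w D)⁻¹ * y D * w D = y D * of D (ofAdd D.g) := by
  rw [w_inv]
  ext <;> simp [w, y, mul_def, of_apply, KleinExtData.act, cocycle, D.F_g]

theorem mk_eq (p : A) (ey ew : Bool) :
    (⟨p, ey, ew⟩ : KleinExt D) =
      of D (ofAdd p) * (bif ey then y D else 1) * (bif ew then w D else 1) := by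
  cases ey <;> cases ew <;> ext <;>
    simp [y, w, mul_def, one_def, of_apply, KleinExtData.act, cocycle]

theorem of_mem_zpowers_of_iff {p q : A} :
    of D (ofAdd p) ∈ zpowers (of D (ofAdd q)) ↔ p ∈ AddSubgroup.zmultiples q := by
  rw [← MonoidHom.map_zpowers, mem_map_iff_mem of_injective, mem_zpowers_iff,
    AddSubgroup.mem_zmultiples_iff]
  simp [← ofAdd_zsmul]

theorem closure_eq_top {q₁ q₂ : A} (h : ∀ p : A, ∃ I J : ℤ, p = I • q₁ + J • q₂) :
    closure {of D (ofAdd q₁), y D, of D (ofAdd q₂), w D} = ⊤ := by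
  refine eq_top_iff.2 fun ⟨p, ey, ew⟩ _ => ?_
  obtain ⟨I, J, rfl⟩ := h p
  rw [mk_eq, ofAdd_add, ofAdd_zsmul, ofAdd_zsmul, map_mul, map_zpow, map_zpow]
  exact mul_mem (mul_mem (mul_mem (zpow_mem (subset_closure (by simp)) _)
    (zpow_mem (subset_closure (by simp)) _)) (cond_mem (subset_closure (by simp)) ey))
    (cond_mem (subset_closure (by simp)) ew)

theorem normalCore_zpowers_of {q q' : A}
    (h : ∀ p, (∀ ey ew, D.act ey ew p ∈ AddSubgroup.zmultiples q) ↔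
      p ∈ AddSubgroup.zmultiples q') :
    (zpowers (of D (ofAdd q))).normalCore = zpowers (of D (ofAdd q')) := by
  have of_mem_core (p : A) : of D (ofAdd p) ∈ (zpowers (of D (ofAdd q))).normalCore ↔
      ∀ ey ew, D.act ey ew p ∈ AddSubgroup.zmultiples q := by
    refine ⟨fun hp ey ew => ?_, fun hp u => ?_⟩
    · simpa [conj_of, of_mem_zpowers_of_iff] using hp ⟨0, ey, ew⟩
    · rw [conj_of, of_mem_zpowers_of_iff]
      exact hp _ _
  ext u
  constructor
  · intro hu
    obtain ⟨p, rfl⟩ : ∃ p, of D (ofAdd p) = u := by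
      obtain ⟨k, rfl⟩ := mem_zpowers_iff.1 (normalCore_le _ hu)
      exact ⟨k • q, by rw [ofAdd_zsmul, map_zpow]⟩
    rw [of_mem_zpowers_of_iff, ← h, ← of_mem_core]
    exact hu
  · intro hu
    obtain ⟨k, rfl⟩ := mem_zpowers_iff.1 hu
    rw [← map_zpow, ← ofAdd_zsmul, of_mem_core, h]
    exact AddSubgroup.zsmul_mem_zmultiples q' k

variable (D) in
def subgroupY (B : AddSubgroup A) (hB : ∀ p ∈ B, D.F p ∈ B) : Subgroup (KleinExt D) where
  carrier := {u | u.a ∈ B ∧ u.ew = false}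
  one_mem' := ⟨B.zero_mem, rfl⟩
  mul_mem' := by
    rintro ⟨p, ey, _⟩ ⟨p', ey', _⟩ ⟨hp, rfl⟩ ⟨hp', rfl⟩
    refine ⟨?_, rfl⟩
    cases ey
    · simpa [mul_def, KleinExtData.act, cocycle] using B.add_mem hp hp'
    · simpa [mul_def, KleinExtData.act, cocycle] using B.add_mem hp (hB _ hp')
  inv_mem' := by
    rintro ⟨p, ey, _⟩ ⟨hp, rfl⟩
    refine ⟨?_, rfl⟩
    cases ey
    · simpa [inv_def, KleinExtData.act, cocycle] using hp
    · simpa [inv_def, KleinExtData.act, cocycle] using hB _ hp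

variable (D) in
def subgroupW (B : AddSubgroup A) (hB : ∀ p ∈ B, D.W p ∈ B) : Subgroup (KleinExt D) where
  carrier := {u | u.a ∈ B ∧ u.ey = false}
  one_mem' := ⟨B.zero_mem, rfl⟩
  mul_mem' := by
    rintro ⟨p, _, ew⟩ ⟨p', _, ew'⟩ ⟨hp, rfl⟩ ⟨hp', rfl⟩
    refine ⟨?_, rfl⟩
    cases ew
    · simpa [mul_def, KleinExtData.act, cocycle] using B.add_mem hp hp'
    · simpa [mul_def, KleinExtData.act, cocycle] using B.add_mem hp (hB _ hp')
  inv_mem' := by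
    rintro ⟨p, _, ew⟩ ⟨hp, rfl⟩
    refine ⟨?_, rfl⟩
    cases ew
    · simpa [inv_def, KleinExtData.act, cocycle] using hp
    · simpa [inv_def, KleinExtData.act, cocycle] using hB _ hp

theorem card_subgroupY (B : AddSubgroup A) (hB : ∀ p ∈ B, D.F p ∈ B) :
    Nat.card (subgroupY D B hB) = Nat.card B * 2 := by
  rw [Nat.card_congr (⟨fun u => (⟨u.1.a, u.2.1⟩, u.1.ey),
    fun v => ⟨⟨v.1, v.2, false⟩, v.1.2, rfl⟩, fun ⟨⟨_, _, _⟩, _, rfl⟩ => rfl, fun _ => rfl⟩ :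
      subgroupY D B hB ≃ B × Bool)]
  simp [Nat.card_prod]

theorem card_subgroupW (B : AddSubgroup A) (hB : ∀ p ∈ B, D.W p ∈ B) :
    Nat.card (subgroupW D B hB) = Nat.card B * 2 := by
  rw [Nat.card_congr (⟨fun u => (⟨u.1.a, u.2.1⟩, u.1.ew),
    fun v => ⟨⟨v.1, false, v.2⟩, v.1.2, rfl⟩, fun ⟨⟨_, _, _⟩, _, rfl⟩ => rfl, fun _ => rfl⟩ :
      subgroupW D B hB ≃ B × Bool)]
  simp [Nat.card_prod]

theorem subgroupY_inf_subgroupW {B B' : AddSubgroup A} (hB : ∀ p ∈ B, D.F p ∈ B)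
    (hB' : ∀ p ∈ B', D.W p ∈ B') (h : B ⊓ B' = ⊥) :
    subgroupY D B hB ⊓ subgroupW D B' hB' = ⊥ := by
  refine eq_bot_iff.2 fun ⟨p, ey, ew⟩ ⟨⟨hp, hew⟩, hp', hey⟩ => ?_
  obtain rfl : p = 0 := AddSubgroup.mem_bot.1 (h ▸ AddSubgroup.mem_inf.2 ⟨hp, hp'⟩)
  subst hew hey
  rfl

theorem closure_of_y (q : A) (hq : D.F q ∈ AddSubgroup.zmultiples q) :
    closure {of D (ofAdd q), y D} = subgroupY D (AddSubgroup.zmultiples q)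
      (AddMonoidHom.mapsTo_zmultiples hq) := by
  refine le_antisymm (closure_le _ |>.2 ?_) fun ⟨p, ey, ew⟩ ⟨⟨k, hk⟩, hew⟩ => ?_
  · rintro u (rfl | rfl)
    · exact ⟨AddSubgroup.mem_zmultiples q, rfl⟩
    · exact ⟨zero_mem _, rfl⟩
  · subst hk hew
    rw [mk_eq, ofAdd_zsmul, map_zpow]
    exact mul_mem (mul_mem (zpow_mem (subset_closure (by simp)) _)
      (cond_mem (subset_closure (by simp)) ey)) (one_mem _)

theorem closure_of_w (q : A) (hq : D.W q ∈ AddSubgroup.zmultiples q) :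
    closure {of D (ofAdd q), w D} = subgroupW D (AddSubgroup.zmultiples q)
      (AddMonoidHom.mapsTo_zmultiples hq) := by
  refine le_antisymm (closure_le _ |>.2 ?_) fun ⟨p, ey, ew⟩ ⟨⟨k, hk⟩, hey⟩ => ?_
  · rintro u (rfl | rfl)
    · exact ⟨AddSubgroup.mem_zmultiples q, rfl⟩
    · exact ⟨zero_mem _, rfl⟩
  · subst hk hey
    rw [mk_eq, ofAdd_zsmul, map_zpow]
    exact mul_mem (mul_mem (zpow_mem (subset_closure (by simp)) _) (one_mem _))
      (cond_mem (subset_closure (by simp)) ew)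

end KleinExt

namespace ExactProduct

variable {N M : ℕ}

def e₁ : ZMod N × ZMod M := (1, 0)

def e₂ : ZMod N × ZMod M := (0, 1)

theorem exists_eq_zsmul_e₁_add_zsmul_e₂ (p : ZMod N × ZMod M) :
    ∃ I J : ℤ, p = I • e₁ + J • e₂ :=
  ⟨p.1.cast, p.2.cast, by ext <;> simp [e₁, e₂]⟩

theorem zsmul_e₁_eq_iff {I J : ℤ} :
    I • (e₁ : ZMod N × ZMod M) = J • e₁ ↔ I ≡ J [ZMOD N] := by
  simp [e₁, ← ZMod.intCast_eq_intCast_iff]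

theorem zsmul_e₂_eq_iff {I J : ℤ} :
    I • (e₂ : ZMod N × ZMod M) = J • e₂ ↔ I ≡ J [ZMOD M] := by
  simp [e₂, ← ZMod.intCast_eq_intCast_iff]

theorem addOrderOf_e₁ : addOrderOf (e₁ : ZMod N × ZMod M) = N := by
  simp [e₁, Prod.addOrderOf]

theorem addOrderOf_e₂ : addOrderOf (e₂ : ZMod N × ZMod M) = M := by
  simp [e₂, Prod.addOrderOf]

theorem mem_zmultiples_e₁_iff {p : ZMod N × ZMod M} :
    p ∈ AddSubgroup.zmultiples e₁ ↔ p.2 = 0 := by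
  refine ⟨fun ⟨k, hk⟩ => by simp [← hk, e₁], fun hp => ⟨p.1.cast, ?_⟩⟩
  ext <;> simp [e₁, hp]

theorem mem_zmultiples_e₂_iff {p : ZMod N × ZMod M} :
    p ∈ AddSubgroup.zmultiples e₂ ↔ p.1 = 0 := by
  refine ⟨fun ⟨k, hk⟩ => by simp [← hk, e₂], fun hp => ⟨p.2.cast, ?_⟩⟩
  ext <;> simp [e₂, hp]

theorem zmultiples_e₁_inf_zmultiples_e₂ :
    AddSubgroup.zmultiples (e₁ : ZMod N × ZMod M) ⊓ AddSubgroup.zmultiples e₂ = ⊥ :=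
  eq_bot_iff.2 fun p hp => by
    obtain ⟨h₁, h₂⟩ := AddSubgroup.mem_inf.1 hp
    exact Prod.ext (mem_zmultiples_e₂_iff.1 h₂) (mem_zmultiples_e₁_iff.1 h₁)

theorem natCast_zsmul_e₁ : (N : ℤ) • (e₁ : ZMod N × ZMod M) = 0 := by
  simp [e₁]

theorem natCast_zsmul_e₂ : (M : ℤ) • (e₂ : ZMod N × ZMod M) = 0 := by
  simp [e₂]

def prodLift {A : Type*} [AddCommGroup A] (u v : A) (hu : (N : ℤ) • u = 0)
    (hv : (M : ℤ) • v = 0) : ZMod N × ZMod M →+ A :=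
  (ZMod.lift N ⟨zmultiplesHom A u, by simpa using hu⟩).coprod
    (ZMod.lift M ⟨zmultiplesHom A v, by simpa using hv⟩)

section prodLift

variable {A : Type*} [AddCommGroup A] {u v : A} {hu : (N : ℤ) • u = 0}
  {hv : (M : ℤ) • v = 0}

theorem prodLift_e₁ : prodLift u v hu hv e₁ = u := by
  simpa [prodLift, e₁] using ZMod.lift_coe N ⟨zmultiplesHom A u, by simpa using hu⟩ 1

theorem prodLift_e₂ : prodLift u v hu hv e₂ = v := by
  simpa [prodLift, e₂] using ZMod.lift_coe M ⟨zmultiplesHom A v, by simpa using hv⟩ 1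

end prodLift

structure Parameters (N M : ℕ) where
  (α β r a s b t c : ℤ)
  α_sq : α ^ 2 ≡ 1 [ZMOD N]
  β_sq : β ^ 2 ≡ 1 [ZMOD M]
  M_mul_r : M * r ≡ 0 [ZMOD N]
  N_mul_b : N * b ≡ 0 [ZMOD M]
  d1 : r * (α + 1 + a) ≡ 0 [ZMOD N]
  d2 : (1 + a) ^ 2 ≡ 1 [ZMOD M]
  d3 : (1 + s) ^ 2 ≡ 1 [ZMOD N]
  d4 : b * (1 + s + β) ≡ 0 [ZMOD M]
  d5 : r * (β - 1 - s) ≡ 0 [ZMOD N]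
  d6 : b * r ≡ 0 [ZMOD M]
  d7 : b * (α - 1 - a) ≡ 0 [ZMOD M]
  d8 : r * b ≡ 0 [ZMOD N]
  d9 : t * (2 + s) ≡ 0 [ZMOD N]
  d10 : c * (1 + β) + t * b ≡ 0 [ZMOD M]
  d11 : t * (1 + α) + c * r ≡ 0 [ZMOD N]
  d12 : c * (2 + a) ≡ 0 [ZMOD M]

namespace Parameters

variable (P : Parameters N M)

def F : ZMod N × ZMod M →+ ZMod N × ZMod M :=
  prodLift (P.α • e₁) (P.r • e₁ + (1 + P.a) • e₂)
    (by rw [smul_comm, natCast_zsmul_e₁, smul_zero])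
    (by
      linear_combination (norm := module)
        zsmul_e₁_eq_iff.2 P.M_mul_r + (1 + P.a) • natCast_zsmul_e₂)

def W : ZMod N × ZMod M →+ ZMod N × ZMod M :=
  prodLift ((1 + P.s) • e₁ + P.b • e₂) (P.β • e₂)
    (by
      linear_combination (norm := module)
        (1 + P.s) • natCast_zsmul_e₁ + zsmul_e₂_eq_iff.2 P.N_mul_b)
    (by rw [smul_comm, natCast_zsmul_e₂, smul_zero])

theorem F_e₁ : P.F e₁ = P.α • e₁ := prodLift_e₁

theorem F_e₂ : P.F e₂ = P.r • e₁ + (1 + P.a) • e₂ := prodLift_e₂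

theorem W_e₁ : P.W e₁ = (1 + P.s) • e₁ + P.b • e₂ := prodLift_e₁

theorem W_e₂ : P.W e₂ = P.β • e₂ := prodLift_e₂

theorem F_involutive : Function.Involutive P.F := fun p => by
  obtain ⟨I, J, rfl⟩ := exists_eq_zsmul_e₁_add_zsmul_e₂ p
  simp only [map_add, map_zsmul, F_e₁, F_e₂]
  linear_combination (norm := module) I • zsmul_e₁_eq_iff.2 P.α_sq +
    J • zsmul_e₁_eq_iff.2 P.d1 + J • zsmul_e₂_eq_iff.2 P.d2

theorem W_involutive : Function.Involutive P.W := fun p => by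
  obtain ⟨I, J, rfl⟩ := exists_eq_zsmul_e₁_add_zsmul_e₂ p
  simp only [map_add, map_zsmul, W_e₁, W_e₂]
  linear_combination (norm := module) I • zsmul_e₁_eq_iff.2 P.d3 +
    I • zsmul_e₂_eq_iff.2 P.d4 + J • zsmul_e₂_eq_iff.2 P.β_sq

theorem F_W_comm (p : ZMod N × ZMod M) : P.F (P.W p) = P.W (P.F p) := by
  obtain ⟨I, J, rfl⟩ := exists_eq_zsmul_e₁_add_zsmul_e₂ p
  simp only [map_add, map_zsmul, F_e₁, F_e₂, W_e₁, W_e₂]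
  linear_combination (norm := module) I • zsmul_e₁_eq_iff.2 P.d8 -
    I • zsmul_e₂_eq_iff.2 P.d7 + J • zsmul_e₁_eq_iff.2 P.d5 - J • zsmul_e₂_eq_iff.2 P.d6

def g : ZMod N × ZMod M := P.t • e₁ + P.c • e₂

theorem F_g : P.F P.g = -P.g := by
  simp only [g, map_add, map_zsmul, F_e₁, F_e₂]
  linear_combination (norm := module) zsmul_e₁_eq_iff.2 P.d11 + zsmul_e₂_eq_iff.2 P.d12

theorem W_g : P.W P.g = -P.g := by
  simp only [g, map_add, map_zsmul, W_e₁, W_e₂]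
  linear_combination (norm := module) zsmul_e₁_eq_iff.2 P.d9 + zsmul_e₂_eq_iff.2 P.d10

@[simps]
def kleinExtData : KleinExtData (ZMod N × ZMod M) :=
  ⟨P.F, P.W, P.g, P.F_involutive, P.W_involutive, P.F_W_comm, P.F_g, P.W_g⟩

theorem forall_act_mem_zmultiples_e₁_iff (p : ZMod N × ZMod M) :
    (∀ ey ew, P.kleinExtData.act ey ew p ∈ AddSubgroup.zmultiples e₁) ↔
      p ∈ AddSubgroup.zmultiples (addOrderOf (P.b : ZMod M) • e₁) := by
  have hb : addOrderOf (P.b : ZMod M) ∣ addOrderOf (e₁ : ZMod N × ZMod M) := by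
    rw [addOrderOf_e₁, ZMod.addOrderOf_intCast_dvd_iff]
    exact P.N_mul_b
  rw [KleinExtData.forall_act_mem_iff_of_F _
    (AddMonoidHom.mapsTo_zmultiples ⟨P.α, P.F_e₁.symm⟩)]
  constructor
  · rintro ⟨⟨I, rfl⟩, hW⟩
    rw [zsmul_mem_zmultiples_addOrderOf_nsmul_iff hb I]
    simp only [kleinExtData_W, map_zsmul, W_e₁] at hW
    simpa [e₁, e₂] using mem_zmultiples_e₁_iff.1 hW
  · intro hp
    obtain ⟨I, rfl⟩ :=
      AddSubgroup.zmultiples_le_of_mem (AddSubgroup.nsmul_mem_zmultiples _ _) hp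
    refine ⟨AddSubgroup.zsmul_mem_zmultiples _ _, mem_zmultiples_e₁_iff.2 ?_⟩
    simp only [kleinExtData_W, map_zsmul, W_e₁]
    simpa [e₁, e₂] using (zsmul_mem_zmultiples_addOrderOf_nsmul_iff hb I).1 hp

theorem forall_act_mem_zmultiples_e₂_iff (p : ZMod N × ZMod M) :
    (∀ ey ew, P.kleinExtData.act ey ew p ∈ AddSubgroup.zmultiples e₂) ↔
      p ∈ AddSubgroup.zmultiples (addOrderOf (P.r : ZMod N) • e₂) := by
  have hr : addOrderOf (P.r : ZMod N) ∣ addOrderOf (e₂ : ZMod N × ZMod M) := by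
    rw [addOrderOf_e₂, ZMod.addOrderOf_intCast_dvd_iff]
    exact P.M_mul_r
  rw [KleinExtData.forall_act_mem_iff_of_W _
    (AddMonoidHom.mapsTo_zmultiples ⟨P.β, P.W_e₂.symm⟩)]
  constructor
  · rintro ⟨⟨J, rfl⟩, hF⟩
    rw [zsmul_mem_zmultiples_addOrderOf_nsmul_iff hr J]
    simp only [kleinExtData_F, map_zsmul, F_e₂] at hF
    simpa [e₁, e₂] using mem_zmultiples_e₂_iff.1 hF
  · intro hp
    obtain ⟨J, rfl⟩ :=
      AddSubgroup.zmultiples_le_of_mem (AddSubgroup.nsmul_mem_zmultiples _ _) hp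
    refine ⟨AddSubgroup.zsmul_mem_zmultiples _ _, mem_zmultiples_e₂_iff.2 ?_⟩
    simp only [kleinExtData_F, map_zsmul, F_e₂]
    simpa [e₁, e₂] using (zsmul_mem_zmultiples_addOrderOf_nsmul_iff hr J).1 hp

abbrev G := KleinExt P.kleinExtData

def x : P.G := KleinExt.of _ (ofAdd e₁)

def z : P.G := KleinExt.of _ (ofAdd e₂)

def y : P.G := KleinExt.y _

def w : P.G := KleinExt.w _

theorem of_zsmul_e₁ (I : ℤ) : KleinExt.of P.kleinExtData (ofAdd (I • e₁)) = P.x ^ I := by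
  rw [ofAdd_zsmul, map_zpow, x]

theorem of_zsmul_e₂ (J : ℤ) : KleinExt.of P.kleinExtData (ofAdd (J • e₂)) = P.z ^ J := by
  rw [ofAdd_zsmul, map_zpow, z]

theorem card_G : Nat.card P.G = N * M * 4 := by
  rw [KleinExt.card, Nat.card_prod, Nat.card_zmod, Nat.card_zmod]

theorem orderOf_x : orderOf P.x = N := by
  rw [x, orderOf_injective _ KleinExt.of_injective, orderOf_ofAdd_eq_addOrderOf, addOrderOf_e₁]

theorem orderOf_z : orderOf P.z = M := by
  rw [z, orderOf_injective _ KleinExt.of_injective, orderOf_ofAdd_eq_addOrderOf, addOrderOf_e₂]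

theorem y_inv_mul_x_mul_y : P.y⁻¹ * P.x * P.y = P.x ^ P.α := by
  rw [y, x, KleinExt.y_inv_mul_of_mul_y, kleinExtData_F, F_e₁, of_zsmul_e₁, x]

theorem w_inv_mul_z_mul_w : P.w⁻¹ * P.z * P.w = P.z ^ P.β := by
  rw [w, z, KleinExt.w_inv_mul_of_mul_w, kleinExtData_W, W_e₂, of_zsmul_e₂, z]

theorem x_mul_z : P.x * P.z = P.z * P.x :=
  (Commute.all (ofAdd e₁) (ofAdd e₂)).map (KleinExt.of _)

theorem y_inv_mul_z_mul_y : P.y⁻¹ * P.z * P.y = P.x ^ P.r * P.z ^ (1 + P.a) := by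
  rw [y, z, KleinExt.y_inv_mul_of_mul_y, kleinExtData_F, F_e₂, ofAdd_add, map_mul, of_zsmul_e₁,
    of_zsmul_e₂, z]

theorem w_inv_mul_x_mul_w : P.w⁻¹ * P.x * P.w = P.x ^ (1 + P.s) * P.z ^ P.b := by
  rw [w, x, KleinExt.w_inv_mul_of_mul_w, kleinExtData_W, W_e₁, ofAdd_add, map_mul, of_zsmul_e₁,
    of_zsmul_e₂, x]

theorem w_inv_mul_y_mul_w : P.w⁻¹ * P.y * P.w = P.y * P.x ^ P.t * P.z ^ P.c := by
  rw [w, y, KleinExt.w_inv_mul_y_mul_w, kleinExtData_g, g, ofAdd_add, map_mul, of_zsmul_e₁,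
    of_zsmul_e₂, mul_assoc]

theorem closure_eq_top : closure {P.x, P.y, P.z, P.w} = ⊤ :=
  KleinExt.closure_eq_top exists_eq_zsmul_e₁_add_zsmul_e₂

theorem closure_x_y : closure {P.x, P.y} = KleinExt.subgroupY _ (AddSubgroup.zmultiples e₁)
    (AddMonoidHom.mapsTo_zmultiples ⟨P.α, P.F_e₁.symm⟩) :=
  KleinExt.closure_of_y e₁ ⟨P.α, P.F_e₁.symm⟩

theorem closure_z_w : closure {P.z, P.w} = KleinExt.subgroupW _ (AddSubgroup.zmultiples e₂)
    (AddMonoidHom.mapsTo_zmultiples ⟨P.β, P.W_e₂.symm⟩) :=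
  KleinExt.closure_of_w e₂ ⟨P.β, P.W_e₂.symm⟩

theorem card_closure_x_y : Nat.card (closure {P.x, P.y}) = N * 2 := by
  rw [P.closure_x_y, KleinExt.card_subgroupY, Nat.card_zmultiples, addOrderOf_e₁]

theorem card_closure_z_w : Nat.card (closure {P.z, P.w}) = M * 2 := by
  rw [P.closure_z_w, KleinExt.card_subgroupW, Nat.card_zmultiples, addOrderOf_e₂]

theorem closure_x_y_inf_closure_z_w : closure {P.x, P.y} ⊓ closure {P.z, P.w} = ⊥ := by
  rw [P.closure_x_y, P.closure_z_w]
  exact KleinExt.subgroupY_inf_subgroupW _ _ zmultiples_e₁_inf_zmultiples_e₂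

theorem normalCore_zpowers_x :
    (zpowers P.x).normalCore = zpowers (P.x ^ addOrderOf (P.b : ZMod M)) := by
  rw [← zpow_natCast, ← of_zsmul_e₁, natCast_zsmul, x]
  exact KleinExt.normalCore_zpowers_of P.forall_act_mem_zmultiples_e₁_iff

theorem normalCore_zpowers_z :
    (zpowers P.z).normalCore = zpowers (P.z ^ addOrderOf (P.r : ZMod N)) := by
  rw [← zpow_natCast, ← of_zsmul_e₂, natCast_zsmul, z]
  exact KleinExt.normalCore_zpowers_of P.forall_act_mem_zmultiples_e₂_iff

end Parameters

end ExactProduct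

theorem Int.two_pow_sub_one_sq_modEq {n : ℕ} (hn : 3 ≤ n) :
    ((2 : ℤ) ^ (n - 2) - 1) ^ 2 ≡ 1 [ZMOD 2 ^ (n - 1)] := by
  obtain ⟨k, rfl⟩ : ∃ k, n = k + 3 := ⟨n - 3, by omega⟩
  refine (Int.modEq_iff_dvd.2 ⟨2 ^ k - 1, ?_⟩).symm
  simp only [show k + 3 - 2 = k + 1 by omega, show k + 3 - 1 = k + 2 by omega]
  ring

theorem stmt_3_general (n m : ℕ) (hn : 4 ≤ n) (hm : 4 ≤ m)
    (n₁ m₁ : ℕ)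
    (hn₁dvd : n₁ ∣ 2 ^ (n - 1)) (hm₁dvd : m₁ ∣ 2 ^ (m - 1))
    (r a s b t c : ℤ)
    (hD1 : r * (((2 : ℤ) ^ (n - 2) - 1) + 1 + a) ≡ 0 [ZMOD (2 : ℤ) ^ (n - 1)])
    (hD2 : (1 + a) ^ 2 ≡ 1 [ZMOD (2 : ℤ) ^ (m - 1)])
    (hD3 : (1 + s) ^ 2 ≡ 1 [ZMOD (2 : ℤ) ^ (n - 1)])
    (hD4 : b * (1 + s + ((2 : ℤ) ^ (m - 2) - 1)) ≡ 0 [ZMOD (2 : ℤ) ^ (m - 1)])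
    (hD5 : r * (((2 : ℤ) ^ (m - 2) - 1) - 1 - s) ≡ 0 [ZMOD (2 : ℤ) ^ (n - 1)])
    (hD6 : b * r ≡ 0 [ZMOD (2 : ℤ) ^ (m - 1)])
    (hD7 : b * (((2 : ℤ) ^ (n - 2) - 1) - 1 - a) ≡ 0 [ZMOD (2 : ℤ) ^ (m - 1)])
    (hD8 : r * b ≡ 0 [ZMOD (2 : ℤ) ^ (n - 1)])
    (hD9 : t * (2 + s) ≡ 0 [ZMOD (2 : ℤ) ^ (n - 1)])
    (hD10 : c * (1 + ((2 : ℤ) ^ (m - 2) - 1)) + t * b ≡ 0 [ZMOD (2 : ℤ) ^ (m - 1)])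
    (hD11 : t * (1 + ((2 : ℤ) ^ (n - 2) - 1)) + c * r ≡ 0 [ZMOD (2 : ℤ) ^ (n - 1)])
    (hD12 : c * (2 + a) ≡ 0 [ZMOD (2 : ℤ) ^ (m - 1)])
    (hordr : addOrderOf ((r : ZMod (2 ^ (n - 1)))) = m₁)
    (hordb : addOrderOf ((b : ZMod (2 ^ (m - 1)))) = n₁) :
    ∃ (G : Type) (_ : Group G) (x y z w : G),
      Nat.card G = 2 ^ (n + m) ∧
      orderOf x = 2 ^ (n - 1) ∧ orderOf y = 2 ∧
      orderOf z = 2 ^ (m - 1) ∧ orderOf w = 2 ∧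
      y⁻¹ * x * y = x ^ ((2 : ℤ) ^ (n - 2) - 1) ∧
      w⁻¹ * z * w = z ^ ((2 : ℤ) ^ (m - 2) - 1) ∧
      x * z = z * x ∧
      y⁻¹ * z * y = x ^ r * z ^ (1 + a) ∧
      w⁻¹ * x * w = x ^ (1 + s) * z ^ b ∧
      w⁻¹ * y * w = y * x ^ t * z ^ c ∧
      Subgroup.closure {x, y, z, w} = ⊤ ∧
      Nat.card (Subgroup.closure {x, y}) = 2 ^ n ∧
      Nat.card (Subgroup.closure {z, w}) = 2 ^ m ∧
      Subgroup.closure {x, y} ⊓ Subgroup.closure {z, w} = ⊥ ∧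
      (Subgroup.zpowers x).normalCore = Subgroup.zpowers (x ^ n₁) ∧
      (Subgroup.zpowers z).normalCore = Subgroup.zpowers (z ^ m₁) := by
  have hN : ((2 ^ (n - 1) : ℕ) : ℤ) = 2 ^ (n - 1) := by push_cast; rfl
  have hM : ((2 ^ (m - 1) : ℕ) : ℤ) = 2 ^ (m - 1) := by push_cast; rfl
  rw [← hN] at hD1 hD3 hD5 hD8 hD9 hD11
  rw [← hM] at hD2 hD4 hD6 hD7 hD10 hD12
  let P : ExactProduct.Parameters (2 ^ (n - 1)) (2 ^ (m - 1)) :=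
    { α := 2 ^ (n - 2) - 1, β := 2 ^ (m - 2) - 1, r, a, s, b, t, c
      α_sq := hN ▸ Int.two_pow_sub_one_sq_modEq (by omega)
      β_sq := hM ▸ Int.two_pow_sub_one_sq_modEq (by omega)
      M_mul_r := ZMod.addOrderOf_intCast_dvd_iff.1 (hordr ▸ hm₁dvd)
      N_mul_b := ZMod.addOrderOf_intCast_dvd_iff.1 (hordb ▸ hn₁dvd)
      d1 := hD1, d2 := hD2, d3 := hD3, d4 := hD4, d5 := hD5, d6 := hD6
      d7 := hD7, d8 := hD8, d9 := hD9, d10 := hD10, d11 := hD11, d12 := hD12 }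
  refine ⟨P.G, inferInstance, P.x, P.y, P.z, P.w, ?_, P.orderOf_x, KleinExt.orderOf_y,
    P.orderOf_z, KleinExt.orderOf_w, P.y_inv_mul_x_mul_y, P.w_inv_mul_z_mul_w, P.x_mul_z,
    P.y_inv_mul_z_mul_y, P.w_inv_mul_x_mul_w, P.w_inv_mul_y_mul_w, P.closure_eq_top, ?_, ?_,
    P.closure_x_y_inf_closure_z_w, hordb ▸ P.normalCore_zpowers_x,
    hordr ▸ P.normalCore_zpowers_z⟩
  · rw [P.card_G, show 4 = 2 ^ 2 from rfl, ← pow_add, ← pow_add]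
    congr 1
    omega
  · rw [P.card_closure_x_y, ← pow_succ]
    congr 1
    omega
  · rw [P.card_closure_z_w, ← pow_succ]
    congr 1
    omega

/-- Sufficiency direction of Theorem B (Theorem 6.1): every tuple
`(r, a, s, b, t, c)` satisfying the twelve congruences (D1)–(D12) together with
the order conditions on `r` and `b` gives rise to an exact product of
`SD_{2^n}` and `SD_{2^m}` with `[x,z] = 1` whose cyclic subgroups `⟨x⟩` and
`⟨z⟩` have prescribed cores `⟨x^{n₁}⟩` and `⟨z^{m₁}⟩`. -/
theorem stmt_3 (n m : ℕ) (hn : 4 ≤ n) (hm : 4 ≤ m)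
    (n₁ m₁ : ℕ) (hn₁pow : ∃ ν : ℕ, n₁ = 2 ^ ν) (hm₁pow : ∃ μ : ℕ, m₁ = 2 ^ μ)
    (hn₁dvd : n₁ ∣ 2 ^ (n - 1)) (hm₁dvd : m₁ ∣ 2 ^ (m - 1))
    (r a s b t c : ℤ)
    (hD1 : r * (((2 : ℤ) ^ (n - 2) - 1) + 1 + a) ≡ 0 [ZMOD (2 : ℤ) ^ (n - 1)])
    (hD2 : (1 + a) ^ 2 ≡ 1 [ZMOD (2 : ℤ) ^ (m - 1)])
    (hD3 : (1 + s) ^ 2 ≡ 1 [ZMOD (2 : ℤ) ^ (n - 1)])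
    (hD4 : b * (1 + s + ((2 : ℤ) ^ (m - 2) - 1)) ≡ 0 [ZMOD (2 : ℤ) ^ (m - 1)])
    (hD5 : r * (((2 : ℤ) ^ (m - 2) - 1) - 1 - s) ≡ 0 [ZMOD (2 : ℤ) ^ (n - 1)])
    (hD6 : b * r ≡ 0 [ZMOD (2 : ℤ) ^ (m - 1)])
    (hD7 : b * (((2 : ℤ) ^ (n - 2) - 1) - 1 - a) ≡ 0 [ZMOD (2 : ℤ) ^ (m - 1)])
    (hD8 : r * b ≡ 0 [ZMOD (2 : ℤ) ^ (n - 1)])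
    (hD9 : t * (2 + s) ≡ 0 [ZMOD (2 : ℤ) ^ (n - 1)])
    (hD10 : c * (1 + ((2 : ℤ) ^ (m - 2) - 1)) + t * b ≡ 0 [ZMOD (2 : ℤ) ^ (m - 1)])
    (hD11 : t * (1 + ((2 : ℤ) ^ (n - 2) - 1)) + c * r ≡ 0 [ZMOD (2 : ℤ) ^ (n - 1)])
    (hD12 : c * (2 + a) ≡ 0 [ZMOD (2 : ℤ) ^ (m - 1)])
    (hordr : addOrderOf ((r : ZMod (2 ^ (n - 1)))) = m₁)
    (hordb : addOrderOf ((b : ZMod (2 ^ (m - 1)))) = n₁) :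
    ∃ (G : Type) (_ : Group G) (x y z w : G),
      Nat.card G = 2 ^ (n + m) ∧
      orderOf x = 2 ^ (n - 1) ∧ orderOf y = 2 ∧
      orderOf z = 2 ^ (m - 1) ∧ orderOf w = 2 ∧
      y⁻¹ * x * y = x ^ ((2 : ℤ) ^ (n - 2) - 1) ∧
      w⁻¹ * z * w = z ^ ((2 : ℤ) ^ (m - 2) - 1) ∧
      x * z = z * x ∧
      y⁻¹ * z * y = x ^ r * z ^ (1 + a) ∧
      w⁻¹ * x * w = x ^ (1 + s) * z ^ b ∧
      w⁻¹ * y * w = y * x ^ t * z ^ c ∧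
      Subgroup.closure {x, y, z, w} = ⊤ ∧
      Nat.card (Subgroup.closure {x, y}) = 2 ^ n ∧
      Nat.card (Subgroup.closure {z, w}) = 2 ^ m ∧
      Subgroup.closure {x, y} ⊓ Subgroup.closure {z, w} = ⊥ ∧
      (Subgroup.zpowers x).normalCore = Subgroup.zpowers (x ^ n₁) ∧
      (Subgroup.zpowers z).normalCore = Subgroup.zpowers (z ^ m₁) :=
  stmt_3_general n m hn hm n₁ m₁ hn₁dvd hm₁dvd r a s b t c hD1 hD2 hD3 hD4 hD5 hD6 hD7 hD8 hD9 hD10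
    hD11 hD12 hordr hordb
end

section
/- Let n, m ≥ 4 be integers and set N = 2^(n-1), M = 2^(m-1), α = 2^(n-2) - 1, β = 2^(m-2) - 1. Let G be a group generated by four elements x, y, z, w (i.e. Subgroup.closure {x, y, z, w} = ⊤) such that: orderOf x = N, orderOf z = M, y^2 = 1, w^2 = 1, x * z = z * x, y⁻¹ * x * y = x^α, w⁻¹ * z * w = z^β, and for integers r, a, s, b one has y⁻¹ * z * y = x^r * z^(1+a) and w⁻¹ * x * w = x^(1+s) * z^b. Assume Subgroup.zpowers x ⊓ Subgroup.zpowers z = ⊥, and let n₁, m₁ be positive divisors of N and M respectively. Then: (1) the normal core of Subgroup.zpowers x in G equals Subgroup.zpowers (x^n₁) if and only if the additive order of (b : ZMod M) equals n₁; and (2) the normal core of Subgroup.zpowers z in G equals Subgroup.zpowers (z^m₁) if and only if the additive order of (r : ZMod N) equals m₁. -/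
/-!
Let `d` be the additive order of `b` modulo `M = ord z`. Conjugating `x ^ k` by `w` gives
`x ^ ((1 + s) k) * z ^ (b k)`, which lies in `⟨x⟩` exactly when `z ^ (b k) = 1` (as
`⟨x⟩ ∩ ⟨z⟩ = 1`), i.e. when `d ∣ k`; so the core of `⟨x⟩` lies in `⟨x ^ d⟩`. Conversely
`⟨x ^ d⟩` is normalised by every generator: `x` and `z` centralise it, while the involutions
`y` and `w` act on `x ^ d` as the powers `α` and `1 + s` (the factor `z ^ (b d)` is trivial).
As `d ∣ N`, the subgroup `⟨x ^ d⟩` determines `d`. The claim for `⟨z⟩` is the same argument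
with the roles of `(x, y)` and `(z, w)` exchanged.
-/

open Subgroup

theorem zpow_mul_eq_one_iff_addOrderOf_dvd {G : Type*} [Group G] (z : G) (b k : ℤ) :
    z ^ (b * k) = 1 ↔ (addOrderOf (b : ZMod (orderOf z)) : ℤ) ∣ k := by
  rw [← orderOf_dvd_iff_zpow_eq_one, addOrderOf_dvd_iff_zsmul_eq_zero, zsmul_eq_mul,
    ← Int.cast_mul, ZMod.intCast_zmod_eq_zero_iff_dvd, mul_comm]

theorem zpowers_pow_inj {G : Type*} [Group G] (x : G) {d e : ℕ} (hx : orderOf x ≠ 0)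
    (hd : d ∣ orderOf x) (he : e ∣ orderOf x) :
    zpowers (x ^ d) = zpowers (x ^ e) ↔ d = e := by
  refine ⟨fun h => ?_, fun h => h ▸ rfl⟩
  have hd0 : d ≠ 0 := by rintro rfl; exact hx (zero_dvd_iff.mp hd)
  have he0 : e ≠ 0 := by rintro rfl; exact hx (zero_dvd_iff.mp he)
  have hord : orderOf x / d = orderOf x / e := by
    rw [← orderOf_pow_of_dvd hd0 hd, ← orderOf_pow_of_dvd he0 he, ← Nat.card_zpowers, h,
      Nat.card_zpowers]
  rw [← Nat.div_div_self hd hx, hord, Nat.div_div_self he hx]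

theorem mem_normalizer_zpowers {G : Type*} [Group G] {g u : G} (h₁ : g * u * g⁻¹ ∈ zpowers u)
    (h₂ : g⁻¹ * u * g ∈ zpowers u) : g ∈ normalizer (zpowers u : Set G) := by
  have hconj : ∀ c : G, c * u * c⁻¹ ∈ zpowers u → ∀ h ∈ zpowers u, c * h * c⁻¹ ∈ zpowers u :=
    fun c hc => (zpowers_le (H := (zpowers u).comap (MulAut.conj c).toMonoidHom)).mpr hc
  refine mem_normalizer_iff.mpr fun h => ⟨hconj g h₁ h, fun hh => ?_⟩
  simpa [mul_assoc] using hconj g⁻¹ (by simpa using h₂) _ hh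

theorem mem_normalizer_zpowers_of_sq_eq_one {G : Type*} [Group G] {g u : G} (hg : g ^ 2 = 1)
    (h : g⁻¹ * u * g ∈ zpowers u) : g ∈ normalizer (zpowers u : Set G) := by
  have hinv : g⁻¹ = g := inv_eq_of_mul_eq_one_right (by rw [← sq, hg])
  exact mem_normalizer_zpowers (by rwa [hinv] at h ⊢) h

theorem mem_normalizer_zpowers_of_commute {G : Type*} [Group G] {g u : G} (h : Commute g u) :
    g ∈ normalizer (zpowers u : Set G) :=
  mem_normalizer_zpowers (by rw [h.mul_inv_cancel]; exact mem_zpowers u)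
    (by rw [h.inv_left.eq, inv_mul_cancel_right]; exact mem_zpowers u)

theorem inv_mul_zpow_mul {G : Type*} [Group G] (g u : G) (k : ℤ) :
    g⁻¹ * u ^ k * g = (g⁻¹ * u * g) ^ k := by
  simpa using (conj_zpow (a := g⁻¹) (b := u) (i := k)).symm

section ExactProduct

variable {G : Type*} [Group G] {x y z w : G} {α t b : ℤ}

theorem conj_zpow_of_conj_eq (hxz : Commute x z) (hxw : w⁻¹ * x * w = x ^ t * z ^ b) (k : ℤ) :
    w⁻¹ * x ^ k * w = (x ^ t) ^ k * z ^ (b * k) := by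
  rw [inv_mul_zpow_mul, hxw, ((hxz.zpow_zpow t b).mul_zpow k), zpow_mul]

theorem zpow_mul_zpow_mem_zpowers_iff (hbot : zpowers x ⊓ zpowers z = ⊥) (i j : ℤ) :
    x ^ i * z ^ j ∈ zpowers x ↔ z ^ j = 1 := by
  refine ⟨fun h => ?_, fun h => h ▸ (mul_one (x ^ i)).symm ▸ zpow_mem (mem_zpowers x) i⟩
  have hz : z ^ j ∈ zpowers x ⊓ zpowers z :=
    ⟨by simpa using mul_mem (zpow_mem (mem_zpowers x) (-i)) h, zpow_mem (mem_zpowers z) j⟩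
  rwa [hbot, mem_bot] at hz

theorem conj_zpow_mem_zpowers_iff (hxz : Commute x z) (hxw : w⁻¹ * x * w = x ^ t * z ^ b)
    (hbot : zpowers x ⊓ zpowers z = ⊥) (k : ℤ) :
    w⁻¹ * x ^ k * w ∈ zpowers x ↔ (addOrderOf (b : ZMod (orderOf z)) : ℤ) ∣ k := by
  rw [conj_zpow_of_conj_eq hxz hxw, ← zpow_mul, zpow_mul_zpow_mem_zpowers_iff hbot,
    zpow_mul_eq_one_iff_addOrderOf_dvd]

theorem addOrderOf_dvd_orderOf (hxz : Commute x z) (hxw : w⁻¹ * x * w = x ^ t * z ^ b)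
    (hbot : zpowers x ⊓ zpowers z = ⊥) :
    addOrderOf (b : ZMod (orderOf z)) ∣ orderOf x := by
  have h := (conj_zpow_mem_zpowers_iff hxz hxw hbot (orderOf x)).mp (by simp)
  exact_mod_cast h

theorem zpowers_pow_addOrderOf_normal (hgen : closure {x, y, z, w} = ⊤) (hy : y ^ 2 = 1)
    (hw : w ^ 2 = 1) (hxz : Commute x z) (hxy : y⁻¹ * x * y = x ^ α)
    (hxw : w⁻¹ * x * w = x ^ t * z ^ b) :
    (zpowers (x ^ addOrderOf (b : ZMod (orderOf z)))).Normal := by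
  set d := addOrderOf (b : ZMod (orderOf z))
  rw [← normalizer_eq_top_iff, eq_top_iff, ← hgen, closure_le]
  rintro g (rfl | rfl | rfl | rfl)
  · exact mem_normalizer_zpowers_of_commute ((Commute.refl g).pow_right d)
  · refine mem_normalizer_zpowers_of_sq_eq_one hy ⟨α, ?_⟩
    dsimp only
    rw [← zpow_natCast, inv_mul_zpow_mul, hxy, ← zpow_mul, ← zpow_mul, mul_comm]
  · exact mem_normalizer_zpowers_of_commute (hxz.symm.pow_right d)
  · refine mem_normalizer_zpowers_of_sq_eq_one hw ⟨t, ?_⟩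
    dsimp only
    rw [← zpow_natCast, conj_zpow_of_conj_eq hxz hxw,
      (zpow_mul_eq_one_iff_addOrderOf_dvd z b d).mpr dvd_rfl, mul_one, ← zpow_mul, ← zpow_mul,
      mul_comm]

theorem normalCore_zpowers_eq (hgen : closure {x, y, z, w} = ⊤) (hy : y ^ 2 = 1) (hw : w ^ 2 = 1)
    (hxz : Commute x z) (hxy : y⁻¹ * x * y = x ^ α) (hxw : w⁻¹ * x * w = x ^ t * z ^ b)
    (hbot : zpowers x ⊓ zpowers z = ⊥) :
    (zpowers x).normalCore = zpowers (x ^ addOrderOf (b : ZMod (orderOf z))) := by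
  refine le_antisymm (fun g hg => ?_) ?_
  · obtain ⟨k, rfl⟩ := mem_zpowers_iff.mp (normalCore_le _ hg)
    have hconj : w⁻¹ * x ^ k * w ∈ zpowers x := by
      simpa using normalCore_le _ ((normalCore_normal _).conj_mem _ hg w⁻¹)
    obtain ⟨e, rfl⟩ := (conj_zpow_mem_zpowers_iff hxz hxw hbot k).mp hconj
    exact ⟨e, by rw [zpow_mul, zpow_natCast]⟩
  · have := zpowers_pow_addOrderOf_normal hgen hy hw hxz hxy hxw
    exact normal_le_normalCore.mpr (zpowers_le.mpr (pow_mem (mem_zpowers x) _))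

end ExactProduct

theorem stmt_4_general (n m : ℕ)
    {G : Type*} [Group G] (x y z w : G) (r a s b : ℤ)
    (hgen : Subgroup.closure {x, y, z, w} = ⊤)
    (hx : orderOf x = 2 ^ (n - 1)) (hz : orderOf z = 2 ^ (m - 1))
    (hy : y ^ 2 = 1) (hw : w ^ 2 = 1)
    (hxz : x * z = z * x)
    (hxy : y⁻¹ * x * y = x ^ ((2 : ℤ) ^ (n - 2) - 1))
    (hzw : w⁻¹ * z * w = z ^ ((2 : ℤ) ^ (m - 2) - 1))
    (hzy : y⁻¹ * z * y = x ^ r * z ^ (1 + a))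
    (hxw : w⁻¹ * x * w = x ^ (1 + s) * z ^ b)
    (hbot : Subgroup.zpowers x ⊓ Subgroup.zpowers z = ⊥)
    (n₁ m₁ : ℕ)
    (hn₁dvd : n₁ ∣ 2 ^ (n - 1)) (hm₁dvd : m₁ ∣ 2 ^ (m - 1)) :
    ((Subgroup.zpowers x).normalCore = Subgroup.zpowers (x ^ n₁) ↔
      addOrderOf ((b : ZMod (2 ^ (m - 1)))) = n₁) ∧
    ((Subgroup.zpowers z).normalCore = Subgroup.zpowers (z ^ m₁) ↔
      addOrderOf ((r : ZMod (2 ^ (n - 1)))) = m₁) := by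
  have hc : Commute x z := hxz
  have hgen' : closure {z, w, x, y} = ⊤ := by
    rw [← hgen]
    congr 1
    ext
    simp only [Set.mem_insert_iff, Set.mem_singleton_iff]
    tauto
  have hbot' : zpowers z ⊓ zpowers x = ⊥ := by rwa [inf_comm]
  have hzy' : y⁻¹ * z * y = z ^ (1 + a) * x ^ r := by rw [hzy, (hc.zpow_zpow r (1 + a)).eq]
  constructor
  · rw [normalCore_zpowers_eq hgen hy hw hc hxy hxw hbot,
      zpowers_pow_inj x (by rw [hx]; positivity) (addOrderOf_dvd_orderOf hc hxw hbot)
        (by rwa [hx]), hz]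
  · rw [normalCore_zpowers_eq hgen' hw hy hc.symm hzw hzy' hbot',
      zpowers_pow_inj z (by rw [hz]; positivity) (addOrderOf_dvd_orderOf hc.symm hzy'
        hbot') (by rwa [hz]), hx]

/-- Lemma 6.3: in an exact product of two semidihedral groups with conjugation
data `(r, a, s, b)` and `[x,z] = 1`, the core of `⟨x⟩` equals `⟨x^{n₁}⟩` iff the
additive order of `b` in `ZMod M` is `n₁`, and the core of `⟨z⟩` equals
`⟨z^{m₁}⟩` iff the additive order of `r` in `ZMod N` is `m₁`. -/
theorem stmt_4 (n m : ℕ) (hn : 4 ≤ n) (hm : 4 ≤ m)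
    {G : Type*} [Group G] (x y z w : G) (r a s b : ℤ)
    (hgen : Subgroup.closure {x, y, z, w} = ⊤)
    (hx : orderOf x = 2 ^ (n - 1)) (hz : orderOf z = 2 ^ (m - 1))
    (hy : y ^ 2 = 1) (hw : w ^ 2 = 1)
    (hxz : x * z = z * x)
    (hxy : y⁻¹ * x * y = x ^ ((2 : ℤ) ^ (n - 2) - 1))
    (hzw : w⁻¹ * z * w = z ^ ((2 : ℤ) ^ (m - 2) - 1))
    (hzy : y⁻¹ * z * y = x ^ r * z ^ (1 + a))
    (hxw : w⁻¹ * x * w = x ^ (1 + s) * z ^ b)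
    (hbot : Subgroup.zpowers x ⊓ Subgroup.zpowers z = ⊥)
    (n₁ m₁ : ℕ) (hn₁pos : 0 < n₁) (hm₁pos : 0 < m₁)
    (hn₁dvd : n₁ ∣ 2 ^ (n - 1)) (hm₁dvd : m₁ ∣ 2 ^ (m - 1)) :
    ((Subgroup.zpowers x).normalCore = Subgroup.zpowers (x ^ n₁) ↔
      addOrderOf ((b : ZMod (2 ^ (m - 1)))) = n₁) ∧
    ((Subgroup.zpowers z).normalCore = Subgroup.zpowers (z ^ m₁) ↔
      addOrderOf ((r : ZMod (2 ^ (n - 1)))) = m₁) :=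
  stmt_4_general n m x y z w r a s b hgen hx hz hy hw hxz hxy hzw hzy hxw hbot n₁ m₁ hn₁dvd hm₁dvd
end

section
/- Let n, m ≥ 4 be integers and set N = 2^(n-1), M = 2^(m-1), α = 2^(n-2) - 1, β = 2^(m-2) - 1. Let a, s, t, c be integers satisfying the six congruences: (1+a)^2 ≡ 1 (mod M), (1+s)^2 ≡ 1 (mod N), t·(2+s) ≡ 0 (mod N), c·(1+β) ≡ 0 (mod M), t·(1+α) ≡ 0 (mod N), and c·(2+a) ≡ 0 (mod M). Then a, s, t and c are all even. -/
namespace Int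

theorem even_of_one_add_sq_modEq_one {x M : ℤ} (hM : 2 ∣ M) (h : (1 + x) ^ 2 ≡ 1 [ZMOD M]) :
    Even x := by
  have hodd : Odd ((1 + x) ^ 2) := Int.odd_iff.mpr (h.of_dvd hM)
  have : Odd (1 + x) := (Int.odd_pow.mp hodd).resolve_right two_ne_zero
  rwa [add_comm, odd_add_one] at this

theorem even_of_mul_two_pow_modEq_zero {x : ℤ} {k : ℕ} (h : x * 2 ^ k ≡ 0 [ZMOD 2 ^ (k + 1)]) :
    Even x := by
  have hdvd : 2 * 2 ^ k ∣ x * 2 ^ k := by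
    simpa [pow_succ', Int.emod_emod_of_dvd] using Int.ModEq.dvd h.symm
  exact even_iff_two_dvd.mpr ((mul_dvd_mul_iff_right (by positivity)).mp hdvd)

end Int

theorem stmt_8_general (n m : ℕ) (hn : 4 ≤ n) (hm : 4 ≤ m) (a s t c : ℤ)
    (hC1 : (1 + a) ^ 2 ≡ 1 [ZMOD (2 : ℤ) ^ (m - 1)])
    (hC2 : (1 + s) ^ 2 ≡ 1 [ZMOD (2 : ℤ) ^ (n - 1)])
    (hC4 : c * (1 + ((2 : ℤ) ^ (m - 2) - 1)) ≡ 0 [ZMOD (2 : ℤ) ^ (m - 1)])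
    (hC5 : t * (1 + ((2 : ℤ) ^ (n - 2) - 1)) ≡ 0 [ZMOD (2 : ℤ) ^ (n - 1)]) :
    Even a ∧ Even s ∧ Even t ∧ Even c := by
  obtain ⟨k, rfl⟩ : ∃ k, n = k + 2 := ⟨n - 2, by omega⟩
  obtain ⟨l, rfl⟩ : ∃ l, m = l + 2 := ⟨m - 2, by omega⟩
  simp only [Nat.add_sub_cancel, add_sub_cancel] at hC1 hC2 hC4 hC5
  exact ⟨Int.even_of_one_add_sq_modEq_one (dvd_pow_self 2 l.succ_ne_zero) hC1,
    Int.even_of_one_add_sq_modEq_one (dvd_pow_self 2 k.succ_ne_zero) hC2,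
    Int.even_of_mul_two_pow_modEq_zero hC5, Int.even_of_mul_two_pow_modEq_zero hC4⟩

/-- Corollary 4.2: the parameters `a, s, t, c` of Theorem A are all even. -/
theorem stmt_8 (n m : ℕ) (hn : 4 ≤ n) (hm : 4 ≤ m) (a s t c : ℤ)
    (hC1 : (1 + a) ^ 2 ≡ 1 [ZMOD (2 : ℤ) ^ (m - 1)])
    (hC2 : (1 + s) ^ 2 ≡ 1 [ZMOD (2 : ℤ) ^ (n - 1)])
    (hC3 : t * (2 + s) ≡ 0 [ZMOD (2 : ℤ) ^ (n - 1)])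
    (hC4 : c * (1 + ((2 : ℤ) ^ (m - 2) - 1)) ≡ 0 [ZMOD (2 : ℤ) ^ (m - 1)])
    (hC5 : t * (1 + ((2 : ℤ) ^ (n - 2) - 1)) ≡ 0 [ZMOD (2 : ℤ) ^ (n - 1)])
    (hC6 : c * (2 + a) ≡ 0 [ZMOD (2 : ℤ) ^ (m - 1)]) :
    Even a ∧ Even s ∧ Even t ∧ Even c :=
  stmt_8_general n m hn hm a s t c hC1 hC2 hC4 hC5
end

section
/- Let n, m ≥ 4 be integers and let G be a group with elements x, y, z, w such that orderOf x = 2^(n-1), orderOf z = 2^(m-1), the cyclic subgroups Subgroup.zpowers x and Subgroup.zpowers z are both normal in G, and Subgroup.zpowers x ⊓ Subgroup.zpowers z = ⊥. Suppose that for integers e₁, e₂, r, a, s, b one has x⁻¹ * z⁻¹ * x * z = x^(e₁) * z^(e₂), z⁻¹ * y⁻¹ * z * y = x^r * z^a, and x⁻¹ * w⁻¹ * x * w = x^s * z^b. Then 2^(n-1) ∣ e₁, 2^(m-1) ∣ e₂, 2^(n-1) ∣ r, and 2^(m-1) ∣ b; equivalently, x * z = z * x, y⁻¹ * z * y = z^(1+a),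 and w⁻¹ * x * w = x^(1+s). -/
/-! Each of the commutators `[x,z]`, `[z,y]`, `[x,w]` has one of its two factors in a normal cyclic
subgroup, so it lies in that subgroup. Since `⟨x⟩ ∩ ⟨z⟩ = 1`, a product `x^i * z^j` lying in
`⟨x⟩` or in `⟨z⟩` has its other factor trivial, and `[x,z]`, lying in both, is trivial itself.
The divisibilities are then read off from the orders of `x` and `z`. -/

namespace Subgroup

variable {G : Type*} [Group G] {H K : Subgroup G} {h k : G}

theorem Normal.inv_mul_conj_mem (hH : H.Normal) (hh : h ∈ H) (g : G) :
    h⁻¹ * g⁻¹ * h * g ∈ H := by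
  simpa only [mul_assoc, inv_inv] using H.mul_mem (H.inv_mem hh) (hH.conj_mem h hh g⁻¹)

theorem Normal.conj_inv_mul_mem (hH : H.Normal) (hh : h ∈ H) (g : G) :
    g⁻¹ * h⁻¹ * g * h ∈ H := by
  simpa only [inv_inv] using H.mul_mem (hH.conj_mem h⁻¹ (H.inv_mem hh) g⁻¹) hh

theorem left_eq_one_of_mul_mem_right (hHK : Disjoint H K) (hh : h ∈ H) (hk : k ∈ K)
    (hhk : h * k ∈ K) : h = 1 :=
  disjoint_def.mp hHK hh (by simpa using K.mul_mem hhk (K.inv_mem hk))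

theorem right_eq_one_of_mul_mem_left (hHK : Disjoint H K) (hh : h ∈ H) (hk : k ∈ K)
    (hhk : h * k ∈ H) : k = 1 :=
  disjoint_def.mp hHK (by simpa using H.mul_mem (H.inv_mem hh) hhk) hk

end Subgroup

theorem intCast_dvd_of_orderOf_eq {G : Type*} [Group G] {g : G} {N : ℕ} {k : ℤ}
    (hg : orderOf g = N) (hk : g ^ k = 1) : (N : ℤ) ∣ k :=
  hg ▸ orderOf_dvd_iff_zpow_eq_one.mpr hk

open Subgroup

theorem stmt_9_general (n m : ℕ)
    {G : Type*} [Group G] (x y z w : G) (e₁ e₂ r a s b : ℤ)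
    (hx : orderOf x = 2 ^ (n - 1)) (hz : orderOf z = 2 ^ (m - 1))
    (hxnorm : (Subgroup.zpowers x).Normal) (hznorm : (Subgroup.zpowers z).Normal)
    (hbot : Subgroup.zpowers x ⊓ Subgroup.zpowers z = ⊥)
    (hxz : x⁻¹ * z⁻¹ * x * z = x ^ e₁ * z ^ e₂)
    (hzy : z⁻¹ * y⁻¹ * z * y = x ^ r * z ^ a)
    (hxw : x⁻¹ * w⁻¹ * x * w = x ^ s * z ^ b) :
    ((2 : ℤ) ^ (n - 1) ∣ e₁ ∧ (2 : ℤ) ^ (m - 1) ∣ e₂ ∧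
      (2 : ℤ) ^ (n - 1) ∣ r ∧ (2 : ℤ) ^ (m - 1) ∣ b) ∧
    (x * z = z * x ∧ y⁻¹ * z * y = z ^ (1 + a) ∧ w⁻¹ * x * w = x ^ (1 + s)) := by
  have hdisj : Disjoint (zpowers x) (zpowers z) := disjoint_iff.mpr hbot
  have hxi (i : ℤ) : x ^ i ∈ zpowers x := zpow_mem_zpowers x i
  have hzi (i : ℤ) : z ^ i ∈ zpowers z := zpow_mem_zpowers z i
  have hcomm : x⁻¹ * z⁻¹ * x * z = 1 := disjoint_def.mp hdisj
    (hxnorm.inv_mul_conj_mem (mem_zpowers x) z) (hznorm.conj_inv_mul_mem (mem_zpowers z) x)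
  obtain ⟨hxe₁, hze₂⟩ := disjoint_iff_mul_eq_one.mp hdisj (hxi e₁) (hzi e₂) (hxz ▸ hcomm)
  have hxr : x ^ r = 1 := left_eq_one_of_mul_mem_right hdisj (hxi r) (hzi a)
    (hzy ▸ hznorm.inv_mul_conj_mem (mem_zpowers z) y)
  have hzb : z ^ b = 1 := right_eq_one_of_mul_mem_left hdisj (hxi s) (hzi b)
    (hxw ▸ hxnorm.inv_mul_conj_mem (mem_zpowers x) w)
  refine ⟨⟨?_, ?_, ?_, ?_⟩, ?_, ?_, ?_⟩
  · exact_mod_cast intCast_dvd_of_orderOf_eq hx hxe₁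
  · exact_mod_cast intCast_dvd_of_orderOf_eq hz hze₂
  · exact_mod_cast intCast_dvd_of_orderOf_eq hx hxr
  · exact_mod_cast intCast_dvd_of_orderOf_eq hz hzb
  · calc x * z = z * x * (x⁻¹ * z⁻¹ * x * z) := by group
      _ = z * x := by rw [hcomm, mul_one]
  · calc y⁻¹ * z * y = z * (z⁻¹ * y⁻¹ * z * y) := by group
      _ = z ^ (1 + a) := by rw [hzy, hxr, one_mul, zpow_one_add]
  · calc w⁻¹ * x * w = x * (x⁻¹ * w⁻¹ * x * w) := by group
      _ = x ^ (1 + s) := by rw [hxw, hzb, mul_one, zpow_one_add]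

/-- Lemma 3.1: in an exact product of two semidihedral groups in which `⟨x⟩`
and `⟨z⟩` are normal, the mixed-commutator parameters `e₁, e₂, r, b` all
vanish, so `[x,z] = 1`, `z^y = z^(1+a)` and `x^w = x^(1+s)`. -/
theorem stmt_9 (n m : ℕ) (hn : 4 ≤ n) (hm : 4 ≤ m)
    {G : Type*} [Group G] (x y z w : G) (e₁ e₂ r a s b : ℤ)
    (hx : orderOf x = 2 ^ (n - 1)) (hz : orderOf z = 2 ^ (m - 1))
    (hxnorm : (Subgroup.zpowers x).Normal) (hznorm : (Subgroup.zpowers z).Normal)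
    (hbot : Subgroup.zpowers x ⊓ Subgroup.zpowers z = ⊥)
    (hxz : x⁻¹ * z⁻¹ * x * z = x ^ e₁ * z ^ e₂)
    (hzy : z⁻¹ * y⁻¹ * z * y = x ^ r * z ^ a)
    (hxw : x⁻¹ * w⁻¹ * x * w = x ^ s * z ^ b) :
    ((2 : ℤ) ^ (n - 1) ∣ e₁ ∧ (2 : ℤ) ^ (m - 1) ∣ e₂ ∧
      (2 : ℤ) ^ (n - 1) ∣ r ∧ (2 : ℤ) ^ (m - 1) ∣ b) ∧
    (x * z = z * x ∧ y⁻¹ * z * y = z ^ (1 + a) ∧ w⁻¹ * x * w = x ^ (1 + s)) :=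
  stmt_9_general n m x y z w e₁ e₂ r a s b hx hz hxnorm hznorm hbot hxz hzy hxw
end

section
/- Let G be a group and x, y, z, w ∈ G with x * z = z * x, and let A = Subgroup.zpowers x ⊔ Subgroup.zpowers z. Suppose that y⁻¹xy ∈ A, y⁻¹zy ∈ A, w⁻¹xw ∈ A, w⁻¹zw ∈ A, and that w⁻¹ * y * w = y * x^t * z^c for some integers t, c. Then y⁻¹ * (w⁻¹ * z * w) * y = w⁻¹ * (y⁻¹ * z * y) * w and y⁻¹ * (w⁻¹ * x * w) * y = w⁻¹ * (y⁻¹ * x * y) * w; that is, the identities (z^w)^y = (z^y)^w and (x^w)^y = (x^y)^w hold in G. -/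
open Subgroup

theorem Commute.isMulCommutative_zpowers_sup_zpowers {G : Type*} [Group G] {x z : G}
    (h : Commute x z) : IsMulCommutative ↥(zpowers x ⊔ zpowers z) := by
  rw [zpowers_eq_closure, zpowers_eq_closure, ← Subgroup.closure_union, Set.singleton_union]
  refine isMulCommutative_closure ?_
  rintro a (rfl | rfl) b (rfl | rfl)
  exacts [rfl, h, h.symm, rfl]

theorem conj_mem_of_mem_zpowers_sup_zpowers {G : Type*} [Group G] {x z w : G} {H : Subgroup G}
    (hx : w⁻¹ * x * w ∈ H) (hz : w⁻¹ * z * w ∈ H) {g : G} (hg : g ∈ zpowers x ⊔ zpowers z) :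
    w⁻¹ * g * w ∈ H := by
  have hle : zpowers x ⊔ zpowers z ≤ H.comap (MulAut.conj w⁻¹).toMonoidHom :=
    sup_le (zpowers_le.2 (by simpa using hx)) (zpowers_le.2 (by simpa using hz))
  simpa using hle hg

-- With `y^w = y a`, the element `(g^w)^y` is the conjugate of `(g^y)^w` by `a⁻¹`.
theorem conj_conj_comm_of_commute {G : Type*} [Group G] {y w a g : G}
    (hyw : w⁻¹ * y * w = y * a) (ha : Commute a (w⁻¹ * (y⁻¹ * g * y) * w)) :
    y⁻¹ * (w⁻¹ * g * w) * y = w⁻¹ * (y⁻¹ * g * y) * w := by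
  obtain rfl : a = y⁻¹ * (w⁻¹ * y * w) := by rw [hyw]; group
  calc y⁻¹ * (w⁻¹ * g * w) * y
      = y⁻¹ * (w⁻¹ * y * w) * (w⁻¹ * (y⁻¹ * g * y) * w) * (y⁻¹ * (w⁻¹ * y * w))⁻¹ := by group
    _ = w⁻¹ * (y⁻¹ * g * y) * w := by rw [ha.eq, mul_inv_cancel_right]

/-- The claim justifying identities (I₃′) and (I₄′) in the proof of Theorem B:
if `x` and `z` commute, all four conjugates `x^y, z^y, x^w, z^w` lie in
`A = ⟨x⟩ ⊔ ⟨z⟩`, and `y^w = y x^t z^c`, then `(z^w)^y = (z^y)^w` and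
`(x^w)^y = (x^y)^w`. -/
theorem stmt_14 {G : Type*} [Group G] (x y z w : G) (t c : ℤ)
    (hxz : x * z = z * x)
    (hxy : y⁻¹ * x * y ∈ Subgroup.zpowers x ⊔ Subgroup.zpowers z)
    (hzy : y⁻¹ * z * y ∈ Subgroup.zpowers x ⊔ Subgroup.zpowers z)
    (hxw : w⁻¹ * x * w ∈ Subgroup.zpowers x ⊔ Subgroup.zpowers z)
    (hzw : w⁻¹ * z * w ∈ Subgroup.zpowers x ⊔ Subgroup.zpowers z)
    (hyw : w⁻¹ * y * w = y * x ^ t * z ^ c) :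
    y⁻¹ * (w⁻¹ * z * w) * y = w⁻¹ * (y⁻¹ * z * y) * w ∧
    y⁻¹ * (w⁻¹ * x * w) * y = w⁻¹ * (y⁻¹ * x * y) * w := by
  have := Commute.isMulCommutative_zpowers_sup_zpowers hxz
  have hmem : x ^ t * z ^ c ∈ zpowers x ⊔ zpowers z :=
    mul_mem (mem_sup_left (zpow_mem_zpowers x t)) (mem_sup_right (zpow_mem_zpowers z c))
  have key (g : G) (hg : y⁻¹ * g * y ∈ zpowers x ⊔ zpowers z) :
      y⁻¹ * (w⁻¹ * g * w) * y = w⁻¹ * (y⁻¹ * g * y) * w :=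
    conj_conj_comm_of_commute (hyw.trans (mul_assoc _ _ _))
      (setLike_mul_comm hmem (conj_mem_of_mem_zpowers_sup_zpowers hxw hzw hg))
  exact ⟨key z hzy, key x hxy⟩
end
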